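/- arXiv:2403.07096 — 5 statements merged into one kernel-verified Lean document; each statement's English description precedes it below -/
import Mathlib

section
/- There exists a universal positive constant C such that for every function u : ℝ → ℝ of class C² which can be written as u = g + h with g ∈ L¹(ℝ) and h ∈ L^∞(ℝ), there exists a countable family 𝒫 of bounded open intervals satisfying: (i) for every x ∈ ℝ, |u'(x)|² ≤ C · Σ_{I∈𝒫} (⨍_I |u''(s)| ds) · (⨍_I |u(s)| ds) · χ_I(x); and (ii) Σ_{I∈𝒫} χ_I(x) ≤ 3 for every x ∈ ℝ. -/
open MeasureTheory ENNReal Set intervalIntegral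

section SparseAux
variable {u : ℝ → ℝ}

private lemma aux_cont (hu : ContDiff ℝ 2 u) :
    Differentiable ℝ u ∧ Differentiable ℝ (deriv u) ∧ Continuous (deriv (deriv u)) := by
  rw [show (2 : WithTop ℕ∞) = 1 + 1 from rfl, contDiff_succ_iff_deriv] at hu
  obtain ⟨h1, -, h2⟩ := hu
  rw [contDiff_one_iff_deriv] at h2
  exact ⟨h1, h2.1, h2.2⟩

private noncomputable def GG (u : ℝ → ℝ) (x : ℝ) : ℝ :=
  ∫ t in (0:ℝ)..x, |deriv (deriv u) t|

private lemma GG_sub (hu : ContDiff ℝ 2 u) (a b : ℝ) :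
    GG u b - GG u a = ∫ t in a..b, |deriv (deriv u) t| := by
  have hw : Continuous fun t => |deriv (deriv u) t| := (aux_cont hu).2.2.abs
  have := integral_add_adjacent_intervals (μ := volume)
    (hw.intervalIntegrable 0 a) (hw.intervalIntegrable a b)
  simp only [GG]; linarith

private lemma GG_mono (hu : ContDiff ℝ 2 u) : Monotone (GG u) := by
  intro a b hab
  have h := GG_sub hu a b
  have : 0 ≤ ∫ t in a..b, |deriv (deriv u) t| :=
    intervalIntegral.integral_nonneg hab fun t _ => abs_nonneg _
  linarith

private lemma GG_cont (hu : ContDiff ℝ 2 u) : Continuous (GG u) := by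
  have hw : Continuous fun t => |deriv (deriv u) t| := (aux_cont hu).2.2.abs
  exact continuous_iff_continuousAt.2 fun b =>
    (hw.integral_hasStrictDerivAt 0 b).hasDerivAt.continuousAt

private lemma deriv_lip (hu : ContDiff ℝ 2 u) (a b : ℝ) :
    |deriv u b - deriv u a| ≤ |GG u b - GG u a| := by
  rcases le_total a b with hab | hab
  · have h1 : deriv u b - deriv u a = ∫ t in a..b, deriv (deriv u) t := by
      rw [integral_deriv_eq_sub (fun x _ => (aux_cont hu).2.1 x)
        ((aux_cont hu).2.2.intervalIntegrable a b)]
    rw [h1, GG_sub hu a b, abs_of_nonneg (intervalIntegral.integral_nonneg hab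
      fun t _ => abs_nonneg _)]
    exact intervalIntegral.abs_integral_le_integral_abs hab
  · have h1 : deriv u a - deriv u b = ∫ t in b..a, deriv (deriv u) t := by
      rw [integral_deriv_eq_sub (fun x _ => (aux_cont hu).2.1 x)
        ((aux_cont hu).2.2.intervalIntegrable b a)]
    rw [abs_sub_comm, h1, abs_sub_comm (GG u b), GG_sub hu b a,
      abs_of_nonneg (intervalIntegral.integral_nonneg hab fun t _ => abs_nonneg _)]
    exact intervalIntegral.abs_integral_le_integral_abs hab

private lemma muI (hu : ContDiff ℝ 2 u) {a b : ℝ} (hab : a ≤ b) :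
    ∫ t in Ioo a b, |deriv (deriv u) t| = GG u b - GG u a := by
  rw [GG_sub hu a b, intervalIntegral.integral_of_le hab,
    MeasureTheory.integral_Ioc_eq_integral_Ioo]

private lemma tail_right (hu : ContDiff ℝ 2 u) {g h : ℝ → ℝ} (hg : Integrable g volume)
    (hh : MemLp h ⊤ volume) (hugh : u = g + h) (x : ℝ) (hd : deriv u x ≠ 0) :
    ∃ b, x < b ∧ GG u x + |deriv u x| / 8 ≤ GG u b := by
  by_contra hcon
  push_neg at hcon
  set d : ℝ := |deriv u x| with hd'
  have hd0 : 0 < d := abs_pos.2 hd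
  have key : ∀ t, x ≤ t → |deriv u t - deriv u x| ≤ d / 8 := by
    intro t ht
    rcases eq_or_lt_of_le ht with rfl | ht
    · simpa using by positivity
    · have h1 := deriv_lip hu x t
      have h2 : GG u t - GG u x ≤ d / 8 := by have := hcon t ht; linarith
      have h3 : 0 ≤ GG u t - GG u x := by have := GG_mono hu ht.le; linarith
      rw [abs_of_nonneg h3] at h1; linarith
  have grow : ∀ b, x ≤ b → (7 / 8) * d * (b - x) ≤ |u b - u x| := by
    intro b hb
    have hsub : u b - u x = ∫ t in x..b, deriv u t := by
      rw [integral_deriv_eq_sub (fun y _ => (aux_cont hu).1 y)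
        (((aux_cont hu).2.1.continuous).intervalIntegrable x b)]
    have herr : |∫ t in x..b, (deriv u t - deriv u x)| ≤ (d / 8) * (b - x) := by
      have h0 := intervalIntegral.norm_integral_le_of_norm_le_const
        (f := fun t => deriv u t - deriv u x) (C := d / 8) (a := x) (b := b) ?_
      · have hbx : |b - x| = b - x := abs_of_nonneg (by linarith)
        rw [Real.norm_eq_abs, hbx] at h0
        exact h0
      · intro t ht
        rw [Set.uIoc_of_le hb] at ht
        rw [Real.norm_eq_abs]
        exact key t ht.1.le
    have hsplit : (∫ t in x..b, (deriv u t - deriv u x)) =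
        (u b - u x) - deriv u x * (b - x) := by
      rw [intervalIntegral.integral_sub
        (((aux_cont hu).2.1.continuous).intervalIntegrable x b)
        intervalIntegrable_const, ← hsub, intervalIntegral.integral_const, smul_eq_mul]
      ring
    rw [hsplit] at herr
    have h4 : |deriv u x * (b - x)| - |u b - u x| ≤ (d/8) * (b-x) := by
      have h5 := abs_sub_abs_le_abs_sub (deriv u x * (b - x)) (u b - u x)
      rw [abs_sub_comm] at herr
      have h6 : deriv u x * (b-x) - (u b - u x) =
          deriv u x * (b - x) - (u b - u x) := rfl
      calc |deriv u x * (b - x)| - |u b - u x|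
          ≤ |deriv u x * (b - x) - (u b - u x)| := h5
        _ ≤ (d/8) * (b-x) := herr
    rw [abs_mul, abs_of_nonneg (by linarith : (0:ℝ) ≤ b - x), ← hd'] at h4
    linarith
  have hNae : ∀ᵐ t : ℝ, ‖h t‖ ≤ (eLpNormEssSup h volume).toReal := by
    have h1 : ∀ᵐ t : ℝ, (‖h t‖₊ : ℝ≥0∞) ≤ eLpNormEssSup h volume :=
      MeasureTheory.ae_le_eLpNormEssSup
    have hfin : eLpNormEssSup h volume ≠ ⊤ := by
      have := hh.2; rwa [eLpNorm_exponent_top, lt_top_iff_ne_top] at this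
    filter_upwards [h1] with t ht
    simpa using ENNReal.toReal_mono hfin ht
  set N : ℝ := (eLpNormEssSup h volume).toReal with hN
  have hN0 : 0 ≤ N := ENNReal.toReal_nonneg
  set T0 : ℝ := x + (1 + |u x| + N) * (8 / (7 * d)) with hT0
  have hT0x : x ≤ T0 := by
    have hpos : 0 ≤ (1 + |u x| + N) * (8 / (7 * d)) := by positivity
    exact hT0 ▸ le_add_of_nonneg_right hpos
  have hae : ∀ᵐ t : ℝ, t ∈ Ioi T0 → 1 ≤ ‖g t‖ := by
    filter_upwards [hNae] with t htN ht
    have ht' : T0 ≤ t := le_of_lt ht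
    have h1 : (7/8) * d * (t - x) ≤ |u t - u x| := grow t (hT0x.trans ht')
    have h2 : (7/8) * d * (T0 - x) ≤ (7/8) * d * (t - x) :=
      mul_le_mul_of_nonneg_left (by linarith) (by positivity)
    have h3 : (7/8) * d * (T0 - x) = (1 + |u x| + N) := by
      rw [hT0]; field_simp; ring
    have h4 : 1 + |u x| + N ≤ |u t - u x| := by linarith
    have h6 : |u t - u x| ≤ |u t| + |u x| := abs_sub _ _
    have h5 : 1 + N ≤ |u t| := by linarith
    have h7 : g t = u t - h t := by rw [hugh]; simp [Pi.add_apply]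
    have h8 : |u t| - |h t| ≤ |g t| := by
      have h9 := abs_sub_abs_le_abs_sub (u t) (h t)
      rw [← h7] at h9; exact h9
    rw [Real.norm_eq_abs] at htN ⊢
    linarith
  have hsub2 : (Ioi T0 : Set ℝ) ≤ᵐ[volume] {t | 1 ≤ ‖g t‖} := by
    filter_upwards [hae] with t ht hmem
    exact ht hmem
  have hfin2 : volume {t : ℝ | 1 ≤ ‖g t‖} < ⊤ :=
    hg.measure_norm_ge_lt_top one_pos
  have hle : volume (Ioi T0) ≤ volume {t : ℝ | 1 ≤ ‖g t‖} := measure_mono_ae hsub2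
  rw [Real.volume_Ioi] at hle
  exact absurd (hle.trans_lt hfin2) (by simp)

private lemma tail_left (hu : ContDiff ℝ 2 u) {g h : ℝ → ℝ} (hg : Integrable g volume)
    (hh : MemLp h ⊤ volume) (hugh : u = g + h) (x : ℝ) (hd : deriv u x ≠ 0) :
    ∃ a, a < x ∧ GG u a ≤ GG u x - |deriv u x| / 8 := by
  by_contra hcon
  push_neg at hcon
  set d : ℝ := |deriv u x| with hd'
  have hd0 : 0 < d := abs_pos.2 hd
  have key : ∀ t, t ≤ x → |deriv u t - deriv u x| ≤ d / 8 := by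
    intro t ht
    rcases eq_or_lt_of_le ht with rfl | ht
    · simpa using by positivity
    · have h1 := deriv_lip hu x t
      have h2 : GG u x - GG u t ≤ d / 8 := by have := hcon t ht; linarith
      have h3 : GG u t - GG u x ≤ 0 := by have := GG_mono hu ht.le; linarith
      rw [abs_of_nonpos h3] at h1; linarith
  have grow : ∀ a, a ≤ x → (7 / 8) * d * (x - a) ≤ |u a - u x| := by
    intro a ha
    have hsub : u x - u a = ∫ t in a..x, deriv u t := by
      rw [integral_deriv_eq_sub (fun y _ => (aux_cont hu).1 y)
        (((aux_cont hu).2.1.continuous).intervalIntegrable a x)]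
    have herr : |∫ t in a..x, (deriv u t - deriv u x)| ≤ (d / 8) * (x - a) := by
      have h0 := intervalIntegral.norm_integral_le_of_norm_le_const
        (f := fun t => deriv u t - deriv u x) (C := d / 8) (a := a) (b := x) ?_
      · have hbx : |x - a| = x - a := abs_of_nonneg (by linarith)
        rw [Real.norm_eq_abs, hbx] at h0
        exact h0
      · intro t ht
        rw [Set.uIoc_of_le ha] at ht
        rw [Real.norm_eq_abs]
        exact key t ht.2
    have hsplit : (∫ t in a..x, (deriv u t - deriv u x)) =
        (u x - u a) - deriv u x * (x - a) := by
      rw [intervalIntegral.integral_sub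
        (((aux_cont hu).2.1.continuous).intervalIntegrable a x)
        intervalIntegrable_const, ← hsub, intervalIntegral.integral_const, smul_eq_mul]
      ring
    rw [hsplit] at herr
    have h4 : |deriv u x * (x - a)| - |u x - u a| ≤ (d/8) * (x-a) := by
      have h5 := abs_sub_abs_le_abs_sub (deriv u x * (x - a)) (u x - u a)
      rw [abs_sub_comm] at herr
      calc |deriv u x * (x - a)| - |u x - u a|
          ≤ |deriv u x * (x - a) - (u x - u a)| := h5
        _ ≤ (d/8) * (x-a) := herr
    rw [abs_mul, abs_of_nonneg (by linarith : (0:ℝ) ≤ x - a), ← hd'] at h4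
    rw [abs_sub_comm]
    linarith
  have hNae : ∀ᵐ t : ℝ, ‖h t‖ ≤ (eLpNormEssSup h volume).toReal := by
    have h1 : ∀ᵐ t : ℝ, (‖h t‖₊ : ℝ≥0∞) ≤ eLpNormEssSup h volume :=
      MeasureTheory.ae_le_eLpNormEssSup
    have hfin : eLpNormEssSup h volume ≠ ⊤ := by
      have := hh.2; rwa [eLpNorm_exponent_top, lt_top_iff_ne_top] at this
    filter_upwards [h1] with t ht
    simpa using ENNReal.toReal_mono hfin ht
  set N : ℝ := (eLpNormEssSup h volume).toReal with hN
  have hN0 : 0 ≤ N := ENNReal.toReal_nonneg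
  set T0 : ℝ := x - (1 + |u x| + N) * (8 / (7 * d)) with hT0
  have hT0x : T0 ≤ x := by
    have hpos : 0 ≤ (1 + |u x| + N) * (8 / (7 * d)) := by positivity
    rw [hT0]; linarith
  have hae : ∀ᵐ t : ℝ, t ∈ Iio T0 → 1 ≤ ‖g t‖ := by
    filter_upwards [hNae] with t htN ht
    have ht' : t ≤ T0 := le_of_lt ht
    have h1 : (7/8) * d * (x - t) ≤ |u t - u x| := grow t (ht'.trans hT0x)
    have h2 : (7/8) * d * (x - T0) ≤ (7/8) * d * (x - t) :=
      mul_le_mul_of_nonneg_left (by linarith) (by positivity)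
    have h3 : (7/8) * d * (x - T0) = (1 + |u x| + N) := by
      rw [hT0]; field_simp; ring
    have h4 : 1 + |u x| + N ≤ |u t - u x| := by linarith
    have h6 : |u t - u x| ≤ |u t| + |u x| := abs_sub _ _
    have h5 : 1 + N ≤ |u t| := by linarith
    have h7 : g t = u t - h t := by rw [hugh]; simp [Pi.add_apply]
    have h8 : |u t| - |h t| ≤ |g t| := by
      have h9 := abs_sub_abs_le_abs_sub (u t) (h t)
      rw [← h7] at h9; exact h9
    rw [Real.norm_eq_abs] at htN ⊢
    linarith
  have hsub2 : (Iio T0 : Set ℝ) ≤ᵐ[volume] {t | 1 ≤ ‖g t‖} := by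
    filter_upwards [hae] with t ht hmem
    exact ht hmem
  have hfin2 : volume {t : ℝ | 1 ≤ ‖g t‖} < ⊤ :=
    hg.measure_norm_ge_lt_top one_pos
  have hle : volume (Iio T0) ≤ volume {t : ℝ | 1 ≤ ‖g t‖} := measure_mono_ae hsub2
  rw [Real.volume_Iio] at hle
  exact absurd (hle.trans_lt hfin2) (by simp)

private lemma lemA (hu : ContDiff ℝ 2 u) {a b x : ℝ} (hx : x ∈ Ioo a b)
    (hM : ∫ t in Ioo a b, |deriv (deriv u) t| ≤ |deriv u x| / 2) :
    |deriv u x| * (b - a) ^ 2 / 18 ≤ ∫ t in Ioo a b, |u t| := by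
  obtain ⟨hax, hxb⟩ := hx
  set d : ℝ := |deriv u x| with hd'
  set M : ℝ := ∫ t in Ioo a b, |deriv (deriv u) t| with hMdef
  set l : ℝ := b - a with hl'
  have hl0 : 0 < l := by rw [hl']; linarith
  have hd0 : 0 ≤ d := abs_nonneg _
  have hInt : ∀ c e : ℝ, IntegrableOn (fun t => |u t|) (Ioo c e) volume := fun c e =>
    (((aux_cont hu).1.continuous.abs).integrableOn_Icc).mono_set Ioo_subset_Icc_self
  have hMG : M = GG u b - GG u a := muI hu (by linarith)
  have hGb : ∀ t, t ∈ Ioo a b → |GG u t - GG u x| ≤ M := by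
    intro t ht
    obtain ⟨h1, h2⟩ := ht
    have m1 := GG_mono hu h1.le
    have m2 := GG_mono hu h2.le
    have m3 := GG_mono hu hax.le
    have m4 := GG_mono hu hxb.le
    rw [abs_le, hMG]
    exact ⟨by linarith, by linarith⟩
  -- pointwise estimate
  have hpt : ∀ p ∈ Ioo a (a + l/3), ∀ q ∈ Ioo (a + 2*l/3) b, d * l / 6 ≤ |u p| + |u q| := by
    intro p hp q hq
    have hpq : l / 3 ≤ q - p := by
      obtain ⟨hp1, hp2⟩ := hp; obtain ⟨hq1, hq2⟩ := hq; linarith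
    have hpI : a < p ∧ p < b := ⟨hp.1, by have := hp.2; linarith⟩
    have hqI : a < q ∧ q < b := ⟨by have := hq.1; linarith, hq.2⟩
    have hple : p ≤ q := by linarith
    have hsub : u q - u p = ∫ t in p..q, deriv u t := by
      rw [integral_deriv_eq_sub (fun y _ => (aux_cont hu).1 y)
        (((aux_cont hu).2.1.continuous).intervalIntegrable p q)]
    have herr : |∫ t in p..q, (deriv u t - deriv u x)| ≤ M * (q - p) := by
      have h0 := intervalIntegral.norm_integral_le_of_norm_le_const
        (f := fun t => deriv u t - deriv u x) (C := M) (a := p) (b := q) ?_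
      · rw [Real.norm_eq_abs, abs_of_nonneg (by linarith : (0:ℝ) ≤ q - p)] at h0
        exact h0
      · intro t ht
        rw [Set.uIoc_of_le hple] at ht
        rw [Real.norm_eq_abs]
        calc |deriv u t - deriv u x| ≤ |GG u t - GG u x| := deriv_lip hu x t
          _ ≤ M := hGb t ⟨by have := ht.1; linarith [hpI.1], by have := ht.2; linarith [hqI.2]⟩
    have hsplit : (∫ t in p..q, (deriv u t - deriv u x)) =
        (u q - u p) - deriv u x * (q - p) := by
      rw [intervalIntegral.integral_sub
        (((aux_cont hu).2.1.continuous).intervalIntegrable p q)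
        intervalIntegrable_const, ← hsub, intervalIntegral.integral_const, smul_eq_mul]
      ring
    rw [hsplit] at herr
    have h4 : |deriv u x * (q - p)| - |u q - u p| ≤ M * (q - p) := by
      have h5 := abs_sub_abs_le_abs_sub (deriv u x * (q - p)) (u q - u p)
      rw [abs_sub_comm] at herr
      calc |deriv u x * (q - p)| - |u q - u p|
          ≤ |deriv u x * (q - p) - (u q - u p)| := h5
        _ ≤ M * (q - p) := herr
    rw [abs_mul, abs_of_nonneg (by linarith : (0:ℝ) ≤ q - p), ← hd'] at h4
    have h6 : |u q - u p| ≤ |u q| + |u p| := abs_sub _ _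
    have h7 : (d - M) * (q - p) ≤ |u q| + |u p| := by nlinarith
    have h8 : d / 2 ≤ d - M := by rw [hMdef] at *; linarith [hM]
    have h9 : (d/2) * (l/3) ≤ (d - M) * (q - p) := by
      apply mul_le_mul h8 hpq (by linarith) (by linarith)
    calc d * l / 6 = (d/2) * (l/3) := by ring
      _ ≤ (d - M) * (q - p) := h9
      _ ≤ |u p| + |u q| := by linarith
  -- set up the two side intervals
  set L : Set ℝ := Ioo a (a + l/3) with hLdef
  set R : Set ℝ := Ioo (a + 2*l/3) b with hRdef
  have hvolL : (volume L).toReal = l / 3 := by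
    rw [hLdef, Real.volume_Ioo, ENNReal.toReal_ofReal (by linarith)]
    ring
  have hvolR : (volume R).toReal = l / 3 := by
    rw [hRdef, Real.volume_Ioo, ENNReal.toReal_ofReal (by linarith)]
    rw [hl']; ring
  have hconstL : ∀ q, q ∈ R → (l/3) * (d * l / 6) - (l/3) * |u q| ≤ ∫ p in L, |u p| := by
    intro q hq
    have hmono : ∫ p in L, (d * l / 6 - |u q|) ≤ ∫ p in L, |u p| := by
      apply setIntegral_mono_on
      · exact integrableOn_const (by rw [hLdef, Real.volume_Ioo]; exact ofReal_ne_top) enorm_ne_top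
      · exact hInt _ _
      · exact measurableSet_Ioo
      · intro p hp
        have := hpt p hp q hq
        linarith
    rw [setIntegral_const, measureReal_def, hvolL, smul_eq_mul] at hmono
    linarith
  have hR2 : (l/3) * ((d * l / 6)) - ∫ p in L, |u p| ≤ ∫ q in R, |u q| := by
    have hmono : ∫ q in R, ((d * l / 6) - (3/l) * ∫ p in L, |u p|) ≤ ∫ q in R, |u q| := by
      apply setIntegral_mono_on
      · exact integrableOn_const (by rw [hRdef, Real.volume_Ioo]; exact ofReal_ne_top) enorm_ne_top
      · exact hInt _ _
      · exact measurableSet_Ioo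
      · intro q hq
        have h1 := hconstL q hq
        have key : (d * l / 6 - (3/l) * ∫ p in L, |u p|) * l ≤ |u q| * l := by
          have hJ : (3/l) * (∫ p in L, |u p|) * l = 3 * ∫ p in L, |u p| := by
            field_simp
          nlinarith [h1, hJ, hl0]
        exact le_of_mul_le_mul_right key hl0
    rw [setIntegral_const, measureReal_def, hvolR, smul_eq_mul] at hmono
    have hl3 : (0:ℝ) < l := hl0
    calc (l/3) * (d * l / 6) - ∫ p in L, |u p|
        = (l/3) * ((d * l / 6) - (3/l) * ∫ p in L, |u p|) := by field_simp
      _ ≤ ∫ q in R, |u q| := hmono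
  -- sum of the two pieces is at most the whole integral
  have hdisj : Disjoint L R := by
    rw [Set.disjoint_left]
    intro t h1 h2
    have := h1.2; have := h2.1
    linarith
  have hunion : (∫ p in L, |u p|) + (∫ q in R, |u q|) ≤ ∫ t in Ioo a b, |u t| := by
    rw [← setIntegral_union hdisj measurableSet_Ioo (hInt _ _) (hInt _ _)]
    apply setIntegral_mono_set (hInt a b)
    · filter_upwards with t using abs_nonneg _
    · apply HasSubset.Subset.eventuallyLE
      apply Set.union_subset
      · intro t ht; exact ⟨ht.1, by have := ht.2; linarith⟩
      · intro t ht; exact ⟨by have := ht.1; linarith, ht.2⟩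
  have : d * l^2/18 = (l/3) * (d * l/6) := by ring
  rw [hl'] at *
  linarith [hR2, hunion]

private lemma beta_spec (hu : ContDiff ℝ 2 u) {x : ℝ} (hx : deriv u x ≠ 0)
    (htail : ∃ b, x < b ∧ GG u x + |deriv u x| / 8 ≤ GG u b) :
    x < sSup {b | x ≤ b ∧ GG u b ≤ GG u x + |deriv u x| / 16} ∧
    GG u (sSup {b | x ≤ b ∧ GG u b ≤ GG u x + |deriv u x| / 16}) =
      GG u x + |deriv u x| / 16 ∧
    ∀ z, sSup {b | x ≤ b ∧ GG u b ≤ GG u x + |deriv u x| / 16} < z →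
      GG u x + |deriv u x| / 16 < GG u z := by
  set d : ℝ := |deriv u x| with hd'
  have hd0 : 0 < d := abs_pos.2 hx
  set c : ℝ := GG u x + d / 16 with hc'
  set B : Set ℝ := {b | x ≤ b ∧ GG u b ≤ c} with hB'
  obtain ⟨b₀, hb₀x, hb₀⟩ := htail
  have hBne : x ∈ B := ⟨le_refl x, by rw [hc']; linarith⟩
  have hBbdd : BddAbove B := by
    refine ⟨b₀, fun b hb => ?_⟩
    by_contra hgt
    push_neg at hgt
    have := GG_mono hu hgt.le
    have := hb.2
    rw [hc'] at this
    linarith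
  have hBclosed : IsClosed B := by
    have : B = Ici x ∩ (GG u) ⁻¹' (Iic c) := by
      ext b; simp [hB', Set.mem_setOf_eq, and_comm]
    rw [this]
    exact isClosed_Ici.inter (isClosed_Iic.preimage (GG_cont hu))
  set β : ℝ := sSup B with hβ'
  have hmem : β ∈ B := hBclosed.csSup_mem ⟨x, hBne⟩ hBbdd
  have hchar : ∀ z, β < z → c < GG u z := by
    intro z hz
    by_contra hle
    push_neg at hle
    have hzB : z ∈ B := ⟨le_trans hmem.1 hz.le, hle⟩
    exact absurd (le_csSup hBbdd hzB) (not_le.2 hz)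
  have heq : GG u β = c := by
    refine le_antisymm hmem.2 ?_
    by_contra hlt
    push_neg at hlt
    have hev : ∀ᶠ z in nhds β, GG u z < c :=
      Filter.Tendsto.eventually_lt_const hlt (GG_cont hu).continuousAt
    have hev2 : ∀ᶠ z in nhdsWithin β (Ioi β), GG u z < c :=
      hev.filter_mono nhdsWithin_le_nhds
    obtain ⟨z, hz1, hz2⟩ := (hev2.and (eventually_mem_nhdsWithin)).exists
    exact absurd hz1 (not_lt.2 (hchar z hz2).le)
  have hxβ : x < β := by
    have hxc : GG u x < c := by rw [hc']; linarith
    have hev : ∀ᶠ z in nhds x, GG u z < c :=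
      Filter.Tendsto.eventually_lt_const hxc (GG_cont hu).continuousAt
    have hev2 : ∀ᶠ z in nhdsWithin x (Ioi x), GG u z < c :=
      hev.filter_mono nhdsWithin_le_nhds
    obtain ⟨z, hz1, hz2⟩ := (hev2.and (eventually_mem_nhdsWithin)).exists
    have hzB : z ∈ B := ⟨(mem_Ioi.1 hz2).le, hz1.le⟩
    exact lt_of_lt_of_le hz2 (le_csSup hBbdd hzB)
  exact ⟨hxβ, heq, hchar⟩

private lemma alpha_spec (hu : ContDiff ℝ 2 u) {x : ℝ} (hx : deriv u x ≠ 0)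
    (htail : ∃ a, a < x ∧ GG u a ≤ GG u x - |deriv u x| / 8) :
    sInf {a | a ≤ x ∧ GG u x - |deriv u x| / 16 ≤ GG u a} < x ∧
    GG u (sInf {a | a ≤ x ∧ GG u x - |deriv u x| / 16 ≤ GG u a}) =
      GG u x - |deriv u x| / 16 ∧
    ∀ z, z < sInf {a | a ≤ x ∧ GG u x - |deriv u x| / 16 ≤ GG u a} →
      GG u z < GG u x - |deriv u x| / 16 := by
  set d : ℝ := |deriv u x| with hd'
  have hd0 : 0 < d := abs_pos.2 hx
  set c : ℝ := GG u x - d / 16 with hc'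
  set B : Set ℝ := {a | a ≤ x ∧ c ≤ GG u a} with hB'
  obtain ⟨a₀, ha₀x, ha₀⟩ := htail
  have hBne : x ∈ B := ⟨le_refl x, by rw [hc']; linarith⟩
  have hBbdd : BddBelow B := by
    refine ⟨a₀, fun b hb => ?_⟩
    by_contra hgt
    push_neg at hgt
    have := GG_mono hu hgt.le
    have := hb.2
    rw [hc'] at this
    linarith
  have hBclosed : IsClosed B := by
    have : B = Iic x ∩ (GG u) ⁻¹' (Ici c) := by
      ext b; simp [hB', Set.mem_setOf_eq, and_comm]
    rw [this]
    exact isClosed_Iic.inter (isClosed_Ici.preimage (GG_cont hu))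
  set α : ℝ := sInf B with hα'
  have hmem : α ∈ B := hBclosed.csInf_mem ⟨x, hBne⟩ hBbdd
  have hchar : ∀ z, z < α → GG u z < c := by
    intro z hz
    by_contra hle
    push_neg at hle
    have hzB : z ∈ B := ⟨le_trans hz.le hmem.1, hle⟩
    exact absurd (csInf_le hBbdd hzB) (not_le.2 hz)
  have heq : GG u α = c := by
    refine le_antisymm ?_ hmem.2
    by_contra hlt
    push_neg at hlt
    have hev : ∀ᶠ z in nhds α, c < GG u z :=
      Filter.Tendsto.eventually_const_lt hlt (GG_cont hu).continuousAt
    have hev2 : ∀ᶠ z in nhdsWithin α (Iio α), c < GG u z :=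
      hev.filter_mono nhdsWithin_le_nhds
    obtain ⟨z, hz1, hz2⟩ := (hev2.and (eventually_mem_nhdsWithin)).exists
    exact absurd hz1 (not_lt.2 (hchar z hz2).le)
  have hxα : α < x := by
    have hxc : c < GG u x := by rw [hc']; linarith
    have hev : ∀ᶠ z in nhds x, c < GG u z :=
      Filter.Tendsto.eventually_const_lt hxc (GG_cont hu).continuousAt
    have hev2 : ∀ᶠ z in nhdsWithin x (Iio x), c < GG u z :=
      hev.filter_mono nhdsWithin_le_nhds
    obtain ⟨z, hz1, hz2⟩ := (hev2.and (eventually_mem_nhdsWithin)).exists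
    have hzB : z ∈ B := ⟨(mem_Iio.1 hz2).le, hz1.le⟩
    exact lt_of_le_of_lt (csInf_le hBbdd hzB) hz2
  exact ⟨hxα, heq, hchar⟩

end SparseAux

open MeasureTheory ENNReal Set

private lemma cell_close {w r g1 g2 : ℝ} (h1 : w - r ≤ g1) (h1' : g1 ≤ w + r)
    (h2 : w - r ≤ g2) (h2' : g2 ≤ w + r)
    (hc : (if g1 < w - r/3 then (0:Fin 3) else if g1 ≤ w + r/3 then 1 else 2) =
          (if g2 < w - r/3 then (0:Fin 3) else if g2 ≤ w + r/3 then 1 else 2)) :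
    |g1 - g2| ≤ (2/3) * r := by
  split_ifs at hc <;>
    first
      | exact absurd hc (by decide)
      | (rw [abs_le]; constructor <;> linarith)

/-- One-dimensional sparse pointwise estimate: for `u ∈ C² ∩ (L¹ + L^∞)(ℝ)` there
is a countable family of bounded open intervals, with overlap at most `3`, whose
sparse averages dominate `|u'|²` pointwise, with a universal constant `C`. -/
theorem sparse_pointwise_estimate_one_dim :
    ∃ C : ℝ, 0 < C ∧
      ∀ u : ℝ → ℝ, ContDiff ℝ 2 u →
        (∃ g h : ℝ → ℝ, Integrable g volume ∧ MemLp h ⊤ volume ∧ u = g + h) →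
        ∃ (ι : Type) (_ : Countable ι) (a b : ι → ℝ),
          (∀ m, a m < b m) ∧
          (∀ x, ENNReal.ofReal (|deriv u x| ^ 2) ≤
            ENNReal.ofReal C *
              ∑' m, (ENNReal.ofReal (⨍ s in Ioo (a m) (b m), |deriv (deriv u) s|)
                  * ENNReal.ofReal (⨍ s in Ioo (a m) (b m), |u s|))
                * (Ioo (a m) (b m)).indicator (fun _ => (1 : ℝ≥0∞)) x) ∧
          (∀ x, ∑' m, (Ioo (a m) (b m)).indicator (fun _ => (1 : ℝ≥0∞)) x ≤ 3) := by
  classical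
  refine ⟨162, by norm_num, ?_⟩
  rintro u hu ⟨g, h, hg, hh, hugh⟩
  set ρ : ℝ → ℝ := fun x => |deriv u x| / 16 with hρdef
  have hρnn : ∀ x, 0 ≤ ρ x := fun x => by rw [hρdef]; positivity
  have hρpos : ∀ x, deriv u x ≠ 0 → 0 < ρ x := fun x hx => by
    rw [hρdef]; exact div_pos (abs_pos.2 hx) (by norm_num)
  have hlip : ∀ x y : ℝ, |ρ x - ρ y| ≤ |GG u x - GG u y| / 16 := by
    intro x y
    have h1 := deriv_lip hu y x
    have h2 := abs_abs_sub_abs_le_abs_sub (deriv u x) (deriv u y)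
    have h3 : ρ x - ρ y = (|deriv u x| - |deriv u y|) / 16 := by rw [hρdef]; ring
    rw [h3, abs_div, abs_of_pos (by norm_num : (0:ℝ) < 16)]
    have h4 : |(|deriv u x| - |deriv u y|)| ≤ |GG u x - GG u y| := h2.trans h1
    linarith
  set bb : ℝ → ℝ := fun x => sSup {b | x ≤ b ∧ GG u b ≤ GG u x + |deriv u x| / 16}
    with hbbdef
  set aa : ℝ → ℝ := fun x => sInf {a | a ≤ x ∧ GG u x - |deriv u x| / 16 ≤ GG u a}
    with haadef
  have hbspec : ∀ x, deriv u x ≠ 0 →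
      x < bb x ∧ GG u (bb x) = GG u x + ρ x ∧ ∀ z, bb x < z → GG u x + ρ x < GG u z :=
    fun x hx => beta_spec hu hx (tail_right hu hg hh hugh x hx)
  have haspec : ∀ x, deriv u x ≠ 0 →
      aa x < x ∧ GG u (aa x) = GG u x - ρ x ∧ ∀ z, z < aa x → GG u z < GG u x - ρ x :=
    fun x hx => alpha_spec hu hx (tail_left hu hg hh hugh x hx)
  -- membership characterizations
  have hmemchar1 : ∀ y, deriv u y ≠ 0 → ∀ z ∈ Ioo (aa y) (bb y),
      |GG u z - GG u y| ≤ ρ y := by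
    intro y hy z hz
    obtain ⟨ha1, ha2, -⟩ := haspec y hy
    obtain ⟨hb1, hb2, -⟩ := hbspec y hy
    have m1 : GG u (aa y) ≤ GG u z := GG_mono hu hz.1.le
    have m2 : GG u z ≤ GG u (bb y) := GG_mono hu hz.2.le
    rw [ha2] at m1; rw [hb2] at m2
    rw [abs_le]
    exact ⟨by linarith, by linarith⟩
  have hmemchar2 : ∀ y, deriv u y ≠ 0 → ∀ z, |GG u z - GG u y| < ρ y →
      z ∈ Ioo (aa y) (bb y) := by
    intro y hy z hz
    rw [abs_lt] at hz
    obtain ⟨ha1, ha2, ha3⟩ := haspec y hy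
    obtain ⟨hb1, hb2, hb3⟩ := hbspec y hy
    constructor
    · by_contra hle
      push_neg at hle
      rcases eq_or_lt_of_le hle with heq | hlt
      · rw [← heq] at ha2; linarith [hz.1]
      · have := ha3 z hlt; linarith [hz.1]
    · by_contra hle
      push_neg at hle
      rcases eq_or_lt_of_le hle with heq | hlt
      · rw [heq] at hb2; linarith [hz.2]
      · have := hb3 z hlt; linarith [hz.2]
  have hmu : ∀ y, deriv u y ≠ 0 →
      ∫ t in Ioo (aa y) (bb y), |deriv (deriv u) t| = 2 * ρ y := by
    intro y hy
    rw [muI hu (le_of_lt (lt_trans (haspec y hy).1 (hbspec y hy).1)),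
      (hbspec y hy).2.1, (haspec y hy).2.1]
    ring
  -- Zorn selection
  set Fam : Set (Set ℝ) := {T | (∀ x ∈ T, deriv u x ≠ 0) ∧
      ∀ p ∈ T, ∀ q ∈ T, p ≠ q → (9/10) * max (ρ p) (ρ q) ≤ |GG u p - GG u q|}
    with hFamdef
  have hzorn : ∃ T, Maximal (· ∈ Fam) T := by
    apply zorn_subset
    intro c hc hchain
    refine ⟨⋃₀ c, ⟨?_, ?_⟩, fun s hs => subset_sUnion_of_mem hs⟩
    · rintro x ⟨s, hs, hxs⟩
      exact (hc hs).1 x hxs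
    · rintro p ⟨s, hs, hps⟩ q ⟨t, ht, hqt⟩ hpq
      rcases hchain.total hs ht with hst | hts
      · exact (hc ht).2 p (hst hps) q hqt hpq
      · exact (hc hs).2 p hps q (hts hqt) hpq
  obtain ⟨T, hTmax⟩ := hzorn
  have hT : T ∈ Fam := hTmax.prop
  -- coverage
  have hcov : ∀ z, deriv u z ≠ 0 → ∃ y ∈ T, |GG u z - GG u y| < ρ y := by
    intro z hz
    by_cases hzT : z ∈ T
    · exact ⟨z, hzT, by simpa using hρpos z hz⟩
    · by_contra hno
      push_neg at hno
      have hkey : ∀ q ∈ T, (9/10) * max (ρ z) (ρ q) ≤ |GG u z - GG u q| := by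
        intro q hqT
        have hnoq := hno q hqT
        have habs : (0:ℝ) ≤ |GG u z - GG u q| := abs_nonneg _
        rcases le_total (ρ z) (ρ q) with hc1 | hc1
        · rw [max_eq_right hc1]
          linarith [hρnn q]
        · rw [max_eq_left hc1]
          have h2 := hlip z q
          have h3 : ρ z - ρ q ≤ |GG u z - GG u q| / 16 := le_trans (le_abs_self _) h2
          linarith [hρnn q]
      have hins : insert z T ∈ Fam := by
        constructor
        · intro x hx
          rcases Set.mem_insert_iff.1 hx with rfl | hxT
          · exact hz
          · exact hT.1 x hxT
        · intro p hp q hq hpq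
          rcases Set.mem_insert_iff.1 hp with rfl | hpT <;>
            rcases Set.mem_insert_iff.1 hq with rfl | hqT
          · exact absurd rfl hpq
          · exact hkey q hqT
          · rw [abs_sub_comm, max_comm]
            exact hkey p hpT
          · exact hT.2 p hpT q hqT hpq
      have hsub : insert z T ⊆ T := hTmax.2 hins (Set.subset_insert z T)
      exact hzT (hsub (Set.mem_insert z T))
  -- countability
  have hTc : T.Countable := by
    apply Set.PairwiseDisjoint.countable_of_isOpen
      (s := fun x : ℝ => Ioo (GG u x - (9/20) * ρ x) (GG u x + (9/20) * ρ x))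
    · intro p hp q hq hpq
      rw [Function.onFun, Set.disjoint_left]
      intro w hw1 hw2
      have hsep := hT.2 p hp q hq hpq
      have e1 : |GG u p - w| < (9/20) * ρ p := by
        rw [abs_lt]; exact ⟨by linarith [hw1.1, hw1.2], by linarith [hw1.1, hw1.2]⟩
      have e2 : |w - GG u q| < (9/20) * ρ q := by
        rw [abs_lt]; exact ⟨by linarith [hw2.1, hw2.2], by linarith [hw2.1, hw2.2]⟩
      have e3 : |GG u p - GG u q| ≤ |GG u p - w| + |w - GG u q| := abs_sub_le _ _ _
      have e4 : (9/20) * (ρ p + ρ q) ≤ (9/10) * max (ρ p) (ρ q) := by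
        rcases le_total (ρ p) (ρ q) with hc1 | hc1
        · rw [max_eq_right hc1]; linarith
        · rw [max_eq_left hc1]; linarith
      linarith
    · intro x _; exact isOpen_Ioo
    · intro x hx
      rw [Set.nonempty_Ioo]
      have := hρpos x (hT.1 x hx)
      linarith
  haveI hTcount : Countable ↥T := hTc.to_subtype
  refine ⟨↥T, inferInstance, fun m => aa ↑m, fun m => bb ↑m, ?_, ?_, ?_⟩
  · intro m
    exact lt_trans (haspec ↑m (hT.1 _ m.2)).1 (hbspec ↑m (hT.1 _ m.2)).1
  · -- pointwise sparse estimate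
    intro x
    by_cases hx : deriv u x = 0
    · have h0 : |deriv u x| ^ 2 = 0 := by rw [hx]; simp
      rw [h0, ENNReal.ofReal_zero]
      exact zero_le
    · obtain ⟨y, hyT, hycov⟩ := hcov x hx
      have hy : deriv u y ≠ 0 := hT.1 y hyT
      have hxI : x ∈ Ioo (aa y) (bb y) := hmemchar2 y hy x hycov
      set l : ℝ := bb y - aa y with hldef
      have hl0 : 0 < l := by
        have := lt_trans (haspec y hy).1 (hbspec y hy).1
        rw [hldef]; linarith
      have hvol : (volume (Ioo (aa y) (bb y))).toReal = l := by
        rw [Real.volume_Ioo, ENNReal.toReal_ofReal (by linarith)]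
      set A : ℝ := ⨍ s in Ioo (aa y) (bb y), |deriv (deriv u) s| with hAdef
      set B : ℝ := ⨍ s in Ioo (aa y) (bb y), |u s| with hBdef
      set J : ℝ := ∫ t in Ioo (aa y) (bb y), |u t| with hJdef
      have hAeq : A = (2 * ρ y) / l := by
        rw [hAdef, setAverage_eq, measureReal_def, hvol, smul_eq_mul, hmu y hy, inv_mul_eq_div]
      have hBeq : B = J / l := by
        rw [hBdef, setAverage_eq, measureReal_def, hvol, smul_eq_mul, hJdef, inv_mul_eq_div]
      set dx : ℝ := |deriv u x| with hdxdef
      set dy : ℝ := |deriv u y| with hdydef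
      have hdx0 : 0 ≤ dx := abs_nonneg _
      have hdy0 : 0 ≤ dy := abs_nonneg _
      have hρy : ρ y = dy / 16 := by rw [hρdef]
      have hGxy : |GG u x - GG u y| ≤ ρ y := hmemchar1 y hy x hxI
      have hdxy : |dx - dy| ≤ ρ y := by
        rw [hdxdef, hdydef]
        exact le_trans (abs_abs_sub_abs_le_abs_sub _ _)
          (le_trans (deriv_lip hu y x) hGxy)
      have hdxy' : dx - dy ≤ dy/16 ∧ dy - dx ≤ dy/16 := by
        rw [abs_le] at hdxy
        constructor <;> [skip; skip] <;> rw [hρy] at hdxy <;> [linarith [hdxy.2]; linarith [hdxy.1]]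
      have hMle : ∫ t in Ioo (aa y) (bb y), |deriv (deriv u) t| ≤ dx / 2 := by
        rw [hmu y hy, hρy]
        obtain ⟨h1, h2⟩ := hdxy'
        linarith
      have hBge : dx * l ^ 2 / 18 ≤ J := by
        have := lemA hu hxI hMle
        rw [← hdxdef, ← hJdef, ← hldef] at this
        exact this
      have hJ0 : 0 ≤ J := by
        rw [hJdef]
        exact setIntegral_nonneg measurableSet_Ioo fun t _ => abs_nonneg _
      have hA0 : 0 ≤ A := by
        rw [hAeq]
        have := hρnn y
        positivity
      have hB0 : 0 ≤ B := by
        rw [hBeq]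
        positivity
      -- the real inequality
      have hreal : dx ^ 2 ≤ 162 * (A * B) := by
        have hA2 : A * l = dy / 8 := by
          rw [hAeq, hρy]
          field_simp
          ring
        have hB2 : B * l = J := by
          rw [hBeq]
          field_simp
        have hABl : A * B * l ^ 2 = (dy / 8) * J := by
          rw [← hA2, ← hB2]; ring
        have h1617 : (16/17) * dx ≤ dy := by
          obtain ⟨h1, h2⟩ := hdxy'
          linarith
        have key : dx ^ 2 * l ^ 2 ≤ (162 * (A * B)) * l ^ 2 := by
          have e1 : (162:ℝ) * (A * B) * l ^ 2 = 162 * (dy / 8 * J) := by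
            rw [← hABl]; ring
          have e2 : dy * (dx * l ^ 2 / 18) ≤ dy * J := mul_le_mul_of_nonneg_left hBge hdy0
          have e3 : (16/17 * dx) * (dx * l ^ 2) ≤ dy * (dx * l ^ 2) :=
            mul_le_mul_of_nonneg_right h1617 (by positivity)
          rw [e1]
          nlinarith [sq_nonneg (dx * l)]
        have hsq : (0:ℝ) < l ^ 2 := by positivity
        exact le_of_mul_le_mul_right key hsq
      -- pass to ENNReal and to the whole sum
      have hterm : ENNReal.ofReal (dx ^ 2) ≤ ENNReal.ofReal 162 *
          ((ENNReal.ofReal A * ENNReal.ofReal B)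
            * (Ioo (aa y) (bb y)).indicator (fun _ => (1:ℝ≥0∞)) x) := by
        rw [Set.indicator_of_mem hxI, mul_one, ← ENNReal.ofReal_mul hA0,
          ← ENNReal.ofReal_mul (by norm_num : (0:ℝ) ≤ 162)]
        exact ENNReal.ofReal_le_ofReal hreal
      refine le_trans hterm (mul_le_mul_right ?_ _)
      exact ENNReal.le_tsum (⟨y, hyT⟩ : ↥T)
  · -- bounded overlap
    intro z
    rw [ENNReal.tsum_eq_iSup_sum]
    apply iSup_le
    intro F
    have hsum : ∑ m ∈ F, (Ioo (aa (↑m : ℝ)) (bb ↑m)).indicator (fun _ => (1:ℝ≥0∞)) z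
        = ((F.filter (fun m : ↥T => z ∈ Ioo (aa ↑m) (bb ↑m))).card : ℝ≥0∞) := by
      rw [← Finset.sum_boole]
      exact Finset.sum_congr rfl fun m _ => by rw [Set.indicator_apply]
    rw [hsum]
    have hcard : (F.filter (fun m : ↥T => z ∈ Ioo (aa ↑m) (bb ↑m))).card ≤ 3 := by
      by_contra hc
      push_neg at hc
      set F' := F.filter (fun m : ↥T => z ∈ Ioo (aa ↑m) (bb ↑m)) with hF'def
      have hne : F'.Nonempty := Finset.card_pos.1 (by omega)
      obtain ⟨m₀, hm₀F, hm₀max⟩ := F'.exists_max_image (fun m => ρ ↑m) hne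
      set r : ℝ := ρ ↑m₀ with hrdef
      have hmemz : ∀ m ∈ F', |GG u z - GG u ↑m| ≤ ρ ↑m := by
        intro m hm
        exact hmemchar1 ↑m (hT.1 _ m.2) z (Finset.mem_filter.1 hm).2
      have hr0 : 0 < r := hρpos _ (hT.1 _ m₀.2)
      have hcomp : ∀ m ∈ F', (15/17) * r ≤ ρ ↑m := by
        intro m hm
        by_cases hmm : (↑m : ℝ) = ↑m₀
        · rw [hrdef, ← hmm]
          linarith [hρpos (↑m : ℝ) (hT.1 _ m.2)]
        · have a1 := hmemz m hm
          have a2 := hmemz m₀ hm₀F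
          have h1 : |GG u ↑m - GG u ↑m₀| ≤ ρ ↑m + ρ ↑m₀ := by
            calc |GG u ↑m - GG u ↑m₀|
                ≤ |GG u ↑m - GG u z| + |GG u z - GG u ↑m₀| := abs_sub_le _ _ _
              _ ≤ ρ ↑m + ρ ↑m₀ := by rw [abs_sub_comm (GG u ↑m)]; linarith
          have h2 := hlip (↑m₀ : ℝ) ↑m
          have h3 : ρ ↑m₀ - ρ ↑m ≤ (ρ ↑m + ρ ↑m₀) / 16 := by
            have h4 := le_trans (le_abs_self _) h2
            rw [abs_sub_comm (GG u ↑m₀)] at h4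
            linarith
          rw [hrdef]
          linarith
      -- pigeonhole into three cells
      have hcardlt : (Finset.univ : Finset (Fin 3)).card < F'.card := by
        simp only [Finset.card_univ, Fintype.card_fin]
        omega
      obtain ⟨m₁, hm₁, m₂, hm₂, hne12, hcell⟩ :=
        Finset.exists_ne_map_eq_of_card_lt_of_maps_to hcardlt
          (f := fun m : ↥T => if GG u ↑m < GG u z - r/3 then (0 : Fin 3)
            else if GG u ↑m ≤ GG u z + r/3 then 1 else 2)
          (fun m _ => Finset.mem_univ _)
      have hb1 : |GG u z - GG u ↑m₁| ≤ r := le_trans (hmemz m₁ hm₁) (hm₀max m₁ hm₁)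
      have hb2 : |GG u z - GG u ↑m₂| ≤ r := le_trans (hmemz m₂ hm₂) (hm₀max m₂ hm₂)
      have hclose : |GG u ↑m₁ - GG u ↑m₂| ≤ (2/3) * r := by
        rw [abs_le] at hb1 hb2
        exact cell_close (by linarith [hb1.1, hb1.2]) (by linarith [hb1.1, hb1.2])
          (by linarith [hb2.1, hb2.2]) (by linarith [hb2.1, hb2.2]) hcell
      have hsep := hT.2 ↑m₁ m₁.2 ↑m₂ m₂.2 (fun hco => hne12 (Subtype.ext hco))
      have hse : (9/10) * ((15/17) * r) ≤ |GG u ↑m₁ - GG u ↑m₂| := by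
        refine le_trans ?_ hsep
        have := le_trans (hcomp m₁ hm₁) (le_max_left (ρ ↑m₁) (ρ ↑m₂))
        linarith
      linarith
    calc ((F.filter (fun m : ↥T => z ∈ Ioo (aa ↑m) (bb ↑m))).card : ℝ≥0∞)
        ≤ ((3:ℕ) : ℝ≥0∞) := by exact_mod_cast hcard
      _ = 3 := by norm_num
end

section
/- Let K > 0 and let 𝒫 = (P_m) be a countable family of measurable subsets of ℝⁿ, each of finite positive Lebesgue measure, such that Σ_m χ_{P_m}(x) ≤ K for every x ∈ ℝⁿ. Then for every u ∈ L¹(ℝⁿ), the function T_𝒫 u = Σ_m (⨍_{P_m} u dλ) χ_{P_m} satisfies ∫_{ℝⁿ} |T_𝒫 u| dλ ≤ K ∫_{ℝⁿ} |u| dλ. -/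
open MeasureTheory ENNReal Set

lemma ofReal_abs_tsum_le {ι : Type} (f : ι → ℝ) :
    ENNReal.ofReal |∑' m, f m| ≤ ∑' m, ENNReal.ofReal |f m| := by
  by_cases h : Summable fun m => |f m|
  · have h' : Summable f := summable_abs_iff.mp h
    calc ENNReal.ofReal |∑' m, f m|
        ≤ ENNReal.ofReal (∑' m, |f m|) := by
          apply ENNReal.ofReal_le_ofReal
          simpa [Real.norm_eq_abs] using norm_tsum_le_tsum_norm
            (f := f) (by simpa [Real.norm_eq_abs] using h)
      _ = ∑' m, ENNReal.ofReal |f m| :=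
          ENNReal.ofReal_tsum_of_nonneg (fun m => abs_nonneg _) h
  · rw [tsum_eq_zero_of_not_summable fun hs => h (summable_abs_iff.mpr hs)]
    simp

/-- The sparse averaging operator `T_𝒫` associated with a countable family of
sets of finite positive measure with overlap at most `K` is bounded on
`L¹(ℝⁿ)` with norm at most `K`. -/
theorem sparse_operator_L1_bound (n : ℕ) (K : ℝ) (hK : 0 < K)
    (ι : Type) [Countable ι] (P : ι → Set (Fin n → ℝ))
    (hmeas : ∀ m, MeasurableSet (P m))
    (hpos : ∀ m, 0 < volume (P m))
    (hfin : ∀ m, volume (P m) < ⊤)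
    (hover : ∀ x, ∑' m, (P m).indicator (fun _ => (1 : ℝ≥0∞)) x ≤
      ENNReal.ofReal K) :
    ∀ u : (Fin n → ℝ) → ℝ, Integrable u volume →
      ∫⁻ x, ENNReal.ofReal
          |∑' m, (⨍ t in P m, u t) * (P m).indicator (fun _ => (1 : ℝ)) x| ≤
        ENNReal.ofReal K * ∫⁻ x, ENNReal.ofReal |u x| := by
  intro u hu
  set c : ι → ℝ := fun m => ⨍ t in P m, u t with hc
  -- term equality
  have hterm : ∀ m x, ENNReal.ofReal |c m * (P m).indicator (fun _ => (1:ℝ)) x|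
      = ENNReal.ofReal |c m| * (P m).indicator (fun _ => (1:ℝ≥0∞)) x := by
    intro m x
    by_cases hx : x ∈ P m <;> simp [Set.indicator, hx]
  -- pointwise bound
  have key : ∀ x, ENNReal.ofReal |∑' m, c m * (P m).indicator (fun _ => (1:ℝ)) x|
      ≤ ∑' m, ENNReal.ofReal |c m| * (P m).indicator (fun _ => (1:ℝ≥0∞)) x := by
    intro x
    calc ENNReal.ofReal |∑' m, c m * (P m).indicator (fun _ => (1:ℝ)) x|
        ≤ ∑' m, ENNReal.ofReal |c m * (P m).indicator (fun _ => (1:ℝ)) x| :=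
          ofReal_abs_tsum_le _
      _ = ∑' m, ENNReal.ofReal |c m| * (P m).indicator (fun _ => (1:ℝ≥0∞)) x :=
          tsum_congr fun m => hterm m x
  calc ∫⁻ x, ENNReal.ofReal |∑' m, c m * (P m).indicator (fun _ => (1:ℝ)) x|
      ≤ ∫⁻ x, ∑' m, ENNReal.ofReal |c m| * (P m).indicator (fun _ => (1:ℝ≥0∞)) x :=
        lintegral_mono key
    _ = ∑' m, ∫⁻ x, ENNReal.ofReal |c m| * (P m).indicator (fun _ => (1:ℝ≥0∞)) x := by
        refine lintegral_tsum fun m => ?_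
        exact ((measurable_const.indicator (hmeas m)).const_mul _).aemeasurable
    _ = ∑' m, ENNReal.ofReal |c m| * volume (P m) := by
        refine tsum_congr fun m => ?_
        rw [lintegral_const_mul _ (measurable_const.indicator (hmeas m))]
        rw [lintegral_indicator (hmeas m), setLIntegral_one]
    _ ≤ ∑' m, ∫⁻ x in P m, ENNReal.ofReal |u x| := by
        refine ENNReal.tsum_le_tsum fun m => ?_
        have hint : IntegrableOn u (P m) := hu.integrableOn
        have havg : |c m| ≤ ⨍ t in P m, |u t| := by
          calc |c m| ≤ ⨍ t in P m, ‖u t‖ := norm_integral_le_integral_norm u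
            _ = ⨍ t in P m, |u t| := by simp [Real.norm_eq_abs]
        have hI : ENNReal.ofReal (∫ t in P m, |u t|) = ∫⁻ t in P m, ENNReal.ofReal |u t| :=
          ofReal_integral_eq_lintegral_ofReal hint.abs
            (Filter.Eventually.of_forall fun t => abs_nonneg _)
        have hvol : volume (P m) ≠ 0 := (hpos m).ne'
        have hvolt : volume (P m) ≠ ⊤ := (hfin m).ne
        calc ENNReal.ofReal |c m| * volume (P m)
            ≤ ENNReal.ofReal (⨍ t in P m, |u t|) * volume (P m) := by
              exact mul_le_mul_left (ENNReal.ofReal_le_ofReal havg) _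
          _ = ∫⁻ t in P m, ENNReal.ofReal |u t| := by
              rw [setAverage_eq, smul_eq_mul, ENNReal.ofReal_mul (by positivity),
                ← hI, measureReal_def, ENNReal.ofReal_inv_of_pos (ENNReal.toReal_pos hvol hvolt),
                ENNReal.ofReal_toReal hvolt, mul_comm, ← mul_assoc,
                ENNReal.mul_inv_cancel hvol hvolt, one_mul]
    _ = ∫⁻ x, ∑' m, (P m).indicator (fun y => ENNReal.ofReal |u y|) x := by
        have hmu : AEMeasurable (fun y => ENNReal.ofReal |u y|) volume :=
          ENNReal.measurable_ofReal.comp_aemeasurable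
            (by simpa [Real.norm_eq_abs] using hu.aemeasurable.norm)
        calc ∑' m, ∫⁻ x in P m, ENNReal.ofReal |u x|
            = ∑' m, ∫⁻ x, (P m).indicator (fun y => ENNReal.ofReal |u y|) x :=
              tsum_congr fun m => (lintegral_indicator (hmeas m) _).symm
          _ = ∫⁻ x, ∑' m, (P m).indicator (fun y => ENNReal.ofReal |u y|) x :=
              (lintegral_tsum fun m => hmu.indicator (hmeas m)).symm
    _ = ∫⁻ x, (∑' m, (P m).indicator (fun _ => (1:ℝ≥0∞)) x) * ENNReal.ofReal |u x| := by
        refine lintegral_congr fun x => ?_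
        rw [← ENNReal.tsum_mul_right]
        exact tsum_congr fun m => by by_cases hx : x ∈ P m <;> simp [Set.indicator, hx]
    _ ≤ ∫⁻ x, ENNReal.ofReal K * ENNReal.ofReal |u x| := by
        refine lintegral_mono fun x => ?_
        gcongr
        exact hover x
    _ = ENNReal.ofReal K * ∫⁻ x, ENNReal.ofReal |u x| := lintegral_const_mul' _ _ ofReal_ne_top
end

section
/- Let K > 0 and let 𝒫 = (P_m) be a countable family of measurable subsets of ℝⁿ, each of finite positive Lebesgue measure, such that Σ_m χ_{P_m}(x) ≤ K for every x ∈ ℝⁿ. Then for every p ∈ [1, ∞] and every measurable u : ℝⁿ → ℝ, the function T_𝒫 u = Σ_m (⨍_{P_m} |u| dλ) χ_{P_m} satisfies ‖T_𝒫 u‖_{L^p(ℝⁿ)} ≤ K ‖u‖_{L^p(ℝⁿ)} as an inequality of extended nonnegative reals. -/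
open MeasureTheory ENNReal Set

/-- Hölder's inequality for `tsum`s in `ℝ≥0∞`. -/
lemma sparse_tsum_holder {ι : Type} [Countable ι] {f g : ι → ℝ≥0∞} {pr qr : ℝ}
    (hpq : pr.HolderConjugate qr) :
    ∑' m, f m * g m ≤ (∑' m, f m ^ pr) ^ (1/pr) * (∑' m, g m ^ qr) ^ (1/qr) := by
  letI : MeasurableSpace ι := ⊤
  haveI : MeasurableSingletonClass ι := ⟨fun _ => MeasurableSpace.measurableSet_top⟩
  have hf : Measurable f := fun _ _ => MeasurableSpace.measurableSet_top
  have hg : Measurable g := fun _ _ => MeasurableSpace.measurableSet_top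
  simpa [MeasureTheory.lintegral_count] using
    ENNReal.lintegral_mul_le_Lp_mul_Lq Measure.count hpq hf.aemeasurable hg.aemeasurable

lemma sparse_ofReal_setIntegral_abs_le {α : Type*} [MeasurableSpace α] {μ : Measure α}
    (u : α → ℝ) (s : Set α) :
    ENNReal.ofReal (∫ t in s, |u t| ∂μ) ≤ ∫⁻ t in s, (‖u t‖₊ : ℝ≥0∞) ∂μ := by
  by_cases hi : Integrable (fun t => |u t|) (μ.restrict s)
  · rw [MeasureTheory.ofReal_integral_eq_lintegral_ofReal hi
      (Filter.Eventually.of_forall fun t => abs_nonneg _)]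
    refine le_of_eq (lintegral_congr fun t => ?_)
    rw [← Real.enorm_eq_ofReal_abs, enorm_eq_nnnorm]
  · rw [integral_undef hi]; simp

/-- The averaging over a set is controlled by the lintegral over the set. -/
lemma sparse_ofReal_setAverage_le {α : Type*} [MeasurableSpace α] {μ : Measure α}
    (u : α → ℝ) {s : Set α} (h0 : μ s ≠ 0) (hfin : μ s ≠ ⊤) :
    ENNReal.ofReal (⨍ t in s, |u t| ∂μ) ≤ (μ s)⁻¹ * ∫⁻ t in s, (‖u t‖₊ : ℝ≥0∞) ∂μ := by
  rw [setAverage_eq, smul_eq_mul, measureReal_def,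
    ENNReal.ofReal_mul (inv_nonneg.2 ENNReal.toReal_nonneg),
    ENNReal.ofReal_inv_of_pos (ENNReal.toReal_pos h0 hfin), ENNReal.ofReal_toReal hfin]
  exact mul_le_mul_right (sparse_ofReal_setIntegral_abs_le u s) _

/-- Jensen's inequality for the average, via Hölder's inequality. -/
lemma sparse_jensen_avg {α : Type*} [MeasurableSpace α] {μ : Measure α}
    (u : α → ℝ) (hu : Measurable u) {s : Set α} (h0 : μ s ≠ 0) (hfin : μ s ≠ ⊤)
    {pr : ℝ} (hpr : 1 ≤ pr) :
    ENNReal.ofReal (⨍ t in s, |u t| ∂μ) ^ pr * μ s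
      ≤ ∫⁻ t in s, (‖u t‖₊ : ℝ≥0∞) ^ pr ∂μ := by
  have hA := sparse_ofReal_setAverage_le (μ := μ) u h0 hfin
  rcases eq_or_lt_of_le hpr with hpr1 | hpr1
  · rw [← hpr1]
    simp only [ENNReal.rpow_one]
    calc ENNReal.ofReal (⨍ t in s, |u t| ∂μ) * μ s
        ≤ (μ s)⁻¹ * (∫⁻ t in s, (‖u t‖₊ : ℝ≥0∞) ∂μ) * μ s := mul_le_mul_left hA _
      _ = ∫⁻ t in s, (‖u t‖₊ : ℝ≥0∞) ∂μ := by
          rw [mul_comm, ← mul_assoc, ENNReal.mul_inv_cancel h0 hfin, one_mul]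
  · set qr := Real.conjExponent pr
    have hpq : pr.HolderConjugate qr := Real.HolderConjugate.conjExponent hpr1
    set J := ∫⁻ t in s, (‖u t‖₊ : ℝ≥0∞) ^ pr ∂μ with hJ
    have hH : (∫⁻ t in s, (‖u t‖₊ : ℝ≥0∞) ∂μ) ≤ J ^ (1/pr) * (μ s) ^ (1/qr) := by
      have := ENNReal.lintegral_mul_le_Lp_mul_Lq (μ.restrict s) hpq
        (hu.nnnorm.coe_nnreal_ennreal).aemeasurable aemeasurable_const
        (f := fun t => (‖u t‖₊ : ℝ≥0∞)) (g := fun _ => 1)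
      simpa [ENNReal.one_rpow, Measure.restrict_apply_univ] using this
    have hA2 : ENNReal.ofReal (⨍ t in s, |u t| ∂μ) ≤ (μ s)⁻¹ * (J ^ (1/pr) * (μ s) ^ (1/qr)) :=
      hA.trans (mul_le_mul_right hH _)
    calc ENNReal.ofReal (⨍ t in s, |u t| ∂μ) ^ pr * μ s
        ≤ ((μ s)⁻¹ * (J ^ (1/pr) * (μ s) ^ (1/qr))) ^ pr * μ s := by
          gcongr
      _ = J * ((μ s) ^ (-pr) * (μ s) ^ (pr/qr) * (μ s) ^ (1:ℝ)) := by
          rw [ENNReal.mul_rpow_of_nonneg _ _ hpq.nonneg,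
            ENNReal.mul_rpow_of_nonneg _ _ hpq.nonneg,
            ← ENNReal.rpow_mul J, one_div_mul_cancel hpq.ne_zero, ENNReal.rpow_one,
            ← ENNReal.rpow_mul (μ s), ENNReal.inv_rpow, ← ENNReal.rpow_neg,
            ENNReal.rpow_one, show 1/qr * pr = pr/qr by ring]
          ring
      _ = J := by
          rw [← ENNReal.rpow_add _ _ h0 hfin, ← ENNReal.rpow_add _ _ h0 hfin,
            hpq.div_conj_eq_sub_one, show -pr + (pr - 1) + 1 = 0 by ring,
            ENNReal.rpow_zero, mul_one]

/-- Summing set-lintegrals over a family with bounded overlap. -/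
lemma sparse_overlap_sum {α : Type*} [MeasurableSpace α] {μ : Measure α} {ι : Type}
    [Countable ι] {P : ι → Set α} (hmeas : ∀ m, MeasurableSet (P m)) {C : ℝ≥0∞}
    (hover : ∀ x, ∑' m, (P m).indicator (fun _ => (1 : ℝ≥0∞)) x ≤ C)
    {h : α → ℝ≥0∞} (hh : Measurable h) :
    ∑' m, ∫⁻ x in P m, h x ∂μ ≤ C * ∫⁻ x, h x ∂μ := by
  calc ∑' m, ∫⁻ x in P m, h x ∂μ
      = ∫⁻ x, ∑' m, (P m).indicator h x ∂μ := by
        rw [lintegral_tsum fun m => (hh.indicator (hmeas m)).aemeasurable]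
        exact tsum_congr fun m => (lintegral_indicator (hmeas m) h).symm
    _ ≤ ∫⁻ x, C * h x ∂μ := by
        refine lintegral_mono fun x => ?_
        have h1 : ∀ m, (P m).indicator h x
            = h x * (P m).indicator (fun _ => (1 : ℝ≥0∞)) x := by
          intro m; by_cases hx : x ∈ P m <;> simp [hx]
        calc ∑' m, (P m).indicator h x
            = h x * ∑' m, (P m).indicator (fun _ => (1 : ℝ≥0∞)) x := by
              rw [← ENNReal.tsum_mul_left]; exact tsum_congr h1
          _ ≤ h x * C := mul_le_mul_right (hover x) _
          _ = C * h x := mul_comm _ _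
    _ = C * ∫⁻ x, h x ∂μ := lintegral_const_mul C hh

/-- The sparse averaging operator `T_𝒫 u = Σ_m (⨍_{P_m} |u|) χ_{P_m}` associated
with a countable family of sets of finite positive measure with overlap at most
`K` is bounded on every `L^p(ℝⁿ)`, `1 ≤ p ≤ ∞`, with norm at most `K`. -/
theorem sparse_operator_Lp_bound (n : ℕ) (K : ℝ) (hK : 0 < K)
    (ι : Type) [Countable ι] (P : ι → Set (Fin n → ℝ))
    (hmeas : ∀ m, MeasurableSet (P m))
    (hpos : ∀ m, 0 < volume (P m))
    (hfin : ∀ m, volume (P m) < ⊤)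
    (hover : ∀ x, ∑' m, (P m).indicator (fun _ => (1 : ℝ≥0∞)) x ≤
      ENNReal.ofReal K) :
    ∀ (p : ℝ≥0∞), 1 ≤ p →
      ∀ u : (Fin n → ℝ) → ℝ, Measurable u →
        eLpNorm
            (fun x => ∑' m, (⨍ t in P m, |u t|)
              * (P m).indicator (fun _ => (1 : ℝ)) x)
            p volume ≤
          ENNReal.ofReal K * eLpNorm u p volume := by
  intro p hp u hu
  have hK0 : ENNReal.ofReal K ≠ 0 := (ENNReal.ofReal_pos.2 hK).ne'
  have hKtop : ENNReal.ofReal K ≠ ⊤ := ENNReal.ofReal_ne_top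
  set A : ι → ℝ≥0∞ := fun m => ENNReal.ofReal (⨍ t in P m, |u t|) with hAdef
  have hAnn : ∀ m, 0 ≤ ⨍ t in P m, |u t| := fun m =>
    integral_nonneg fun t => abs_nonneg _
  -- pointwise bound on the enorm of the sum by the ℝ≥0∞-valued sum
  have hpt : ∀ x, (‖(∑' m, (⨍ t in P m, |u t|)
        * (P m).indicator (fun _ => (1 : ℝ)) x)‖₊ : ℝ≥0∞)
      ≤ ∑' m, A m * (P m).indicator (fun _ => (1 : ℝ≥0∞)) x := by
    intro x
    have hnn : ∀ m, 0 ≤ (⨍ t in P m, |u t|) * (P m).indicator (fun _ => (1 : ℝ)) x :=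
      fun m => mul_nonneg (hAnn m) (indicator_nonneg (fun _ _ => zero_le_one) x)
    by_cases hs : Summable fun m =>
        (⨍ t in P m, |u t|) * (P m).indicator (fun _ => (1 : ℝ)) x
    · rw [← enorm_eq_nnnorm, Real.enorm_eq_ofReal (tsum_nonneg hnn), ENNReal.ofReal_tsum_of_nonneg hnn hs]
      refine le_of_eq (tsum_congr fun m => ?_)
      by_cases hx : x ∈ P m <;> simp [hx, hAdef]
    · rw [tsum_eq_zero_of_not_summable hs]; simp
  by_cases hptop : p = ∞
  · -- the case p = ∞
    subst hptop
    simp only [eLpNorm_exponent_top]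
    set M := eLpNormEssSup u volume with hM
    have hb : ∀ m, A m ≤ M := by
      intro m
      refine (sparse_ofReal_setAverage_le u (hpos m).ne' (hfin m).ne).trans ?_
      have hI : (∫⁻ t in P m, (‖u t‖₊ : ℝ≥0∞) ∂volume) ≤ M * volume (P m) := by
        calc ∫⁻ t in P m, (‖u t‖₊ : ℝ≥0∞) ∂volume
            ≤ ∫⁻ _ in P m, M ∂volume :=
              lintegral_mono_ae (ae_restrict_of_ae ae_le_eLpNormEssSup)
          _ = M * volume (P m) := by rw [setLIntegral_const]
      calc (volume (P m))⁻¹ * ∫⁻ t in P m, (‖u t‖₊ : ℝ≥0∞) ∂volume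
          ≤ (volume (P m))⁻¹ * (M * volume (P m)) := mul_le_mul_right hI _
        _ = M := by
            rw [mul_comm M, ← mul_assoc, ENNReal.inv_mul_cancel (hpos m).ne' (hfin m).ne,
              one_mul]
    refine essSup_le_of_ae_le _ (Filter.Eventually.of_forall fun x => ?_)
    refine (hpt x).trans ?_
    calc ∑' m, A m * (P m).indicator (fun _ => (1 : ℝ≥0∞)) x
        ≤ ∑' m, M * (P m).indicator (fun _ => (1 : ℝ≥0∞)) x :=
          ENNReal.tsum_le_tsum fun m => mul_le_mul_left (hb m) _
      _ = M * ∑' m, (P m).indicator (fun _ => (1 : ℝ≥0∞)) x := ENNReal.tsum_mul_left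
      _ ≤ M * ENNReal.ofReal K := mul_le_mul_right (hover x) _
      _ = ENNReal.ofReal K * M := mul_comm _ _
  · -- the case p < ∞
    have hp0 : p ≠ 0 := (lt_of_lt_of_le zero_lt_one hp).ne'
    set pr := p.toReal with hprdef
    have hpr0 : 0 < pr := ENNReal.toReal_pos hp0 hptop
    have hpr1 : (1 : ℝ) ≤ pr := by
      rw [← ENNReal.toReal_one]; exact ENNReal.toReal_mono hptop hp
    rw [eLpNorm_eq_lintegral_rpow_enorm_toReal hp0 hptop,
      eLpNorm_eq_lintegral_rpow_enorm_toReal hp0 hptop]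
    set S : (Fin n → ℝ) → ℝ≥0∞ :=
      fun x => ∑' m, A m ^ pr * (P m).indicator (fun _ => (1 : ℝ≥0∞)) x with hSdef
    -- pointwise Hölder bound
    have hg : ∀ x, (∑' m, A m * (P m).indicator (fun _ => (1 : ℝ≥0∞)) x) ^ pr
        ≤ ENNReal.ofReal K ^ (pr - 1) * S x := by
      intro x
      rcases eq_or_lt_of_le hpr1 with hpr_eq | hpr_lt
      · simp only [hSdef, ← hpr_eq, ENNReal.rpow_one, sub_self, ENNReal.rpow_zero, one_mul]
        exact le_refl _
      · set qr := Real.conjExponent pr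
        have hpq : pr.HolderConjugate qr := Real.HolderConjugate.conjExponent hpr_lt
        have hgx : (∑' m, A m * (P m).indicator (fun _ => (1 : ℝ≥0∞)) x)
            ≤ (S x) ^ (1/pr) * (ENNReal.ofReal K) ^ (1/qr) := by
          calc ∑' m, A m * (P m).indicator (fun _ => (1 : ℝ≥0∞)) x
              = ∑' m, (A m * (P m).indicator (fun _ => (1 : ℝ≥0∞)) x)
                  * (P m).indicator (fun _ => (1 : ℝ≥0∞)) x := by
                refine tsum_congr fun m => ?_
                by_cases hx : x ∈ P m <;> simp [hx]
            _ ≤ (∑' m, (A m * (P m).indicator (fun _ => (1 : ℝ≥0∞)) x) ^ pr) ^ (1/pr)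
                  * (∑' m, ((P m).indicator (fun _ => (1 : ℝ≥0∞)) x) ^ qr) ^ (1/qr) :=
                sparse_tsum_holder hpq
            _ ≤ (S x) ^ (1/pr) * (ENNReal.ofReal K) ^ (1/qr) := by
                refine mul_le_mul' (ENNReal.rpow_le_rpow ?_ hpq.one_div_nonneg)
                  (ENNReal.rpow_le_rpow ?_ hpq.symm.one_div_nonneg)
                · refine le_of_eq (tsum_congr fun m => ?_)
                  rw [ENNReal.mul_rpow_of_nonneg _ _ hpq.nonneg]
                  by_cases hx : x ∈ P m <;>
                    simp [hx, ENNReal.zero_rpow_of_pos hpq.pos]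
                · refine le_trans (le_of_eq (tsum_congr fun m' => ?_)) (hover x)
                  by_cases hx : x ∈ P m' <;>
                    simp [hx, ENNReal.zero_rpow_of_pos hpq.symm.pos]
        calc (∑' m, A m * (P m).indicator (fun _ => (1 : ℝ≥0∞)) x) ^ pr
            ≤ ((S x) ^ (1/pr) * (ENNReal.ofReal K) ^ (1/qr)) ^ pr :=
              ENNReal.rpow_le_rpow hgx hpq.nonneg
          _ = ENNReal.ofReal K ^ (pr - 1) * S x := by
              rw [ENNReal.mul_rpow_of_nonneg _ _ hpq.nonneg, ← ENNReal.rpow_mul,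
                ← ENNReal.rpow_mul, one_div_mul_cancel hpq.ne_zero, ENNReal.rpow_one,
                show 1/qr * pr = pr/qr by ring, hpq.div_conj_eq_sub_one, mul_comm]
    -- main chain of inequalities for the lintegral
    have key : (∫⁻ x, (‖(∑' m, (⨍ t in P m, |u t|)
          * (P m).indicator (fun _ => (1 : ℝ)) x)‖₊ : ℝ≥0∞) ^ pr)
        ≤ ENNReal.ofReal K ^ pr * ∫⁻ x, (‖u x‖₊ : ℝ≥0∞) ^ pr := by
      calc (∫⁻ x, (‖(∑' m, (⨍ t in P m, |u t|)
            * (P m).indicator (fun _ => (1 : ℝ)) x)‖₊ : ℝ≥0∞) ^ pr)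
          ≤ ∫⁻ x, ENNReal.ofReal K ^ (pr - 1) * S x := by
            refine lintegral_mono fun x => ?_
            exact (ENNReal.rpow_le_rpow (hpt x) hpr0.le).trans (hg x)
        _ = ENNReal.ofReal K ^ (pr - 1) * ∫⁻ x, S x :=
            lintegral_const_mul' _ _
              (ENNReal.rpow_ne_top_of_nonneg (sub_nonneg.2 hpr1) hKtop)
        _ = ENNReal.ofReal K ^ (pr - 1) * ∑' m, A m ^ pr * volume (P m) := by
            congr 1
            rw [hSdef, lintegral_tsum fun m => (measurable_const.indicator
              (hmeas m)).const_mul _ |>.aemeasurable]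
            refine tsum_congr fun m => ?_
            rw [lintegral_const_mul' _ _
                (ENNReal.rpow_ne_top_of_nonneg hpr0.le ENNReal.ofReal_ne_top),
              lintegral_indicator (hmeas m), setLIntegral_one]
        _ ≤ ENNReal.ofReal K ^ (pr - 1) * ∑' m, ∫⁻ x in P m, (‖u x‖₊ : ℝ≥0∞) ^ pr := by
            refine mul_le_mul_right (ENNReal.tsum_le_tsum fun m => ?_) _
            exact sparse_jensen_avg u hu (hpos m).ne' (hfin m).ne hpr1
        _ ≤ ENNReal.ofReal K ^ (pr - 1)
              * (ENNReal.ofReal K * ∫⁻ x, (‖u x‖₊ : ℝ≥0∞) ^ pr) :=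
            mul_le_mul_right (sparse_overlap_sum hmeas hover
              (hu.nnnorm.coe_nnreal_ennreal.pow_const pr)) _
        _ = ENNReal.ofReal K ^ pr * ∫⁻ x, (‖u x‖₊ : ℝ≥0∞) ^ pr := by
            rw [← mul_assoc]
            congr 1
            rw [← ENNReal.rpow_one (ENNReal.ofReal K), ← ENNReal.rpow_mul,
              ← ENNReal.rpow_add _ _ hK0 hKtop]
            norm_num
    calc (∫⁻ x, (‖(∑' m, (⨍ t in P m, |u t|)
          * (P m).indicator (fun _ => (1 : ℝ)) x)‖₊ : ℝ≥0∞) ^ pr) ^ (1/pr)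
        ≤ (ENNReal.ofReal K ^ pr * ∫⁻ x, (‖u x‖₊ : ℝ≥0∞) ^ pr) ^ (1/pr) :=
          ENNReal.rpow_le_rpow key (by positivity)
      _ = ENNReal.ofReal K * (∫⁻ x, (‖u x‖₊ : ℝ≥0∞) ^ pr) ^ (1/pr) := by
          rw [ENNReal.mul_rpow_of_nonneg _ _ (by positivity), ← ENNReal.rpow_mul,
            mul_one_div_cancel hpr0.ne', ENNReal.rpow_one]
end

section
/- Let φ : [0, ∞) → [0, ∞) be a convex, nondecreasing function with φ(0) = 0 (a Young function). Let K ≥ 1 and let 𝒫 = (P_m) be a countable family of measurable subsets of ℝⁿ, each of finite positive Lebesgue measure, such that Σ_m χ_{P_m}(x) ≤ K for every x ∈ ℝⁿ. Then for every measurable u : ℝⁿ → ℝ, ∫_{ℝⁿ} φ( (1/K) · Σ_m (⨍_{P_m} |u| dλ) χ_{P_m}(x) ) dx ≤ ∫_{ℝⁿ} φ(|u(x)|) dx. -/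
open MeasureTheory ENNReal Set

private lemma phi_continuousOn {φ : ℝ → ℝ} (hconv : ConvexOn ℝ (Ici 0) φ)
    (hzero : φ 0 = 0) (hnn : ∀ t : ℝ, 0 ≤ t → 0 ≤ φ t) : ContinuousOn φ (Ici 0) := by
  intro x hx
  rcases eq_or_lt_of_le (mem_Ici.mp hx : (0:ℝ) ≤ x) with h0 | h0
  · subst h0
    have hb : ∀ᶠ t in nhdsWithin 0 (Ici (0:ℝ)), φ t ≤ t * φ 1 := by
      filter_upwards [self_mem_nhdsWithin,
        eventually_nhdsWithin_of_eventually_nhds (Filter.Tendsto.eventually_lt_const one_pos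
          Filter.tendsto_id)] with t ht1 ht2
      have h2' : (0:ℝ) ≤ 1 - t := by simp only [id] at ht2; linarith
      have := hconv.2 (mem_Ici.mpr zero_le_one) (self_mem_Ici) ht1 h2' (by ring)
      simpa [hzero, smul_eq_mul] using this
    have hnn' : ∀ᶠ t in nhdsWithin 0 (Ici (0:ℝ)), 0 ≤ φ t := by
      filter_upwards [self_mem_nhdsWithin] with t ht using hnn t ht
    have htend : Filter.Tendsto (fun t : ℝ => t * φ 1) (nhdsWithin 0 (Ici (0:ℝ))) (nhds 0) := by
      have : Filter.Tendsto (fun t : ℝ => t * φ 1) (nhds 0) (nhds (0 * φ 1)) :=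
        (continuous_id.mul continuous_const).tendsto 0
      simpa using this.mono_left nhdsWithin_le_nhds
    have := squeeze_zero' hnn' hb htend
    simpa [ContinuousWithinAt, hzero] using this
  · have hco : ContinuousOn φ (Ioi 0) :=
      (hconv.subset Ioi_subset_Ici_self (convex_Ioi 0)).continuousOn isOpen_Ioi
    exact (hco.continuousAt (Ioi_mem_nhds h0)).continuousWithinAt

private lemma jensen_finset {φ : ℝ → ℝ} (hconv : ConvexOn ℝ (Ici 0) φ) (hzero : φ 0 = 0)
    {ι : Type} (T : Finset ι) (c : ι → ℝ) (hc : ∀ m, 0 ≤ c m)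
    {K : ℝ} (hK : 0 < K) (hcard : (T.card : ℝ) ≤ K) :
    φ ((1 / K) * ∑ m ∈ T, c m) ≤ (1 / K) * ∑ m ∈ T, φ (c m) := by
  rcases T.eq_empty_or_nonempty with rfl | hT
  · simp [hzero]
  · have hN : (0:ℝ) < T.card := by exact_mod_cast Finset.card_pos.mpr hT
    set N : ℝ := (T.card : ℝ) with hNdef
    have hsum : 0 ≤ ∑ m ∈ T, c m := Finset.sum_nonneg fun m _ => hc m
    set t : ℝ := (∑ m ∈ T, c m) / N with ht
    have htmem : t ∈ Ici (0:ℝ) := div_nonneg hsum hN.le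
    have step2 : φ t ≤ ∑ m ∈ T, (1/N) * φ (c m) := by
      have h := hconv.map_sum_le (t := T) (w := fun _ => 1/N) (p := c)
        (fun i _ => by positivity) (by rw [Finset.sum_const, nsmul_eq_mul, ← hNdef, mul_one_div_cancel hN.ne']) (fun i _ => hc i)
      have hsum_eq : ∑ m ∈ T, (1/N) • c m = t := by
        rw [← Finset.smul_sum, smul_eq_mul, ht]; ring
      rwa [hsum_eq] at h
    have h1 : (0:ℝ) ≤ N/K := by positivity
    have h2 : (0:ℝ) ≤ 1 - N/K := by
      rw [sub_nonneg, div_le_one hK]; exact hcard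
    have step1 : φ ((N/K) * t) ≤ (N/K) * φ t := by
      have := hconv.2 htmem (self_mem_Ici) h1 h2 (by ring)
      simpa [hzero, smul_eq_mul] using this
    have heq : (1/K) * ∑ m ∈ T, c m = (N/K) * t := by
      rw [ht]; field_simp
    calc φ ((1/K) * ∑ m ∈ T, c m) = φ ((N/K) * t) := by rw [heq]
      _ ≤ (N/K) * φ t := step1
      _ ≤ (N/K) * ∑ m ∈ T, (1/N) * φ (c m) := mul_le_mul_of_nonneg_left step2 h1
      _ = (1/K) * ∑ m ∈ T, φ (c m) := by
          rw [← Finset.mul_sum, ← mul_assoc, div_mul_div_comm, mul_one,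
            mul_comm K N, ← div_div, div_self hN.ne']

/-- Modular (Orlicz) inequality for the sparse averaging operator: if `φ` is a
Young function and the family `𝒫` has overlap at most `K ≥ 1`, then
`ρ_φ(T_𝒫|u|/K) ≤ ρ_φ(u)`. -/
theorem sparse_operator_modular_bound (n : ℕ) (φ : ℝ → ℝ)
    (hconv : ConvexOn ℝ (Ici 0) φ) (hmono : MonotoneOn φ (Ici 0))
    (hzero : φ 0 = 0)
    (K : ℝ) (hK : 1 ≤ K)
    (ι : Type) [Countable ι] (P : ι → Set (Fin n → ℝ))
    (hmeas : ∀ m, MeasurableSet (P m))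
    (hpos : ∀ m, 0 < volume (P m))
    (hfin : ∀ m, volume (P m) < ⊤)
    (hover : ∀ x, ∑' m, (P m).indicator (fun _ => (1 : ℝ≥0∞)) x ≤
      ENNReal.ofReal K) :
    ∀ u : (Fin n → ℝ) → ℝ, Measurable u →
      ∫⁻ x, ENNReal.ofReal
          (φ ((1 / K) * ∑' m, (⨍ t in P m, |u t|)
            * (P m).indicator (fun _ => (1 : ℝ)) x)) ≤
        ∫⁻ x, ENNReal.ofReal (φ |u x|) := by
  intro u hu
  classical
  have hK0 : (0:ℝ) < K := lt_of_lt_of_le one_pos hK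
  have hφ0 : ∀ t : ℝ, 0 ≤ t → 0 ≤ φ t := fun t ht => hzero ▸ hmono self_mem_Ici ht ht
  have hcont : ContinuousOn φ (Ici 0) := phi_continuousOn hconv hzero hφ0
  have hφu : Measurable fun x : Fin n → ℝ => φ |u x| := by
    have h1 : Continuous fun y : Ici (0:ℝ) => φ y :=
      continuousOn_iff_continuous_restrict.mp hcont
    have h2 : Measurable fun x : Fin n → ℝ => (⟨|u x|, mem_Ici.mpr (abs_nonneg _)⟩ : Ici (0:ℝ)) :=
      (hu.abs).subtype_mk
    exact h1.measurable.comp h2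
  set F : (Fin n → ℝ) → ℝ≥0∞ := fun x => ENNReal.ofReal (φ |u x|) with hFdef
  have hFmeas : Measurable F := hφu.ennreal_ofReal
  by_cases htop : ∫⁻ x, F x = ⊤
  · rw [htop]; exact le_top
  set c : ι → ℝ := fun m => ⨍ t in P m, |u t| with hcdef
  have hc : ∀ m, 0 ≤ c m := by
    intro m
    rw [hcdef]
    simp only [setAverage_eq, smul_eq_mul]
    exact mul_nonneg (by positivity) (integral_nonneg fun t => abs_nonneg _)
  set d : ι → ℝ := fun m => φ (c m) with hddef
  have hd : ∀ m, 0 ≤ d m := fun m => hφ0 _ (hc m)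
  -- per-index bound via Jensen
  have perm : ∀ m, ENNReal.ofReal (d m) * volume (P m) ≤ ∫⁻ x in P m, F x := by
    intro m
    by_cases hint : IntegrableOn (fun t => |u t|) (P m) volume
    · have hFfin : ∫⁻ x in P m, F x ≠ ⊤ :=
        ne_top_of_le_ne_top htop (setLIntegral_le_lintegral _ _)
      have hnnae : 0 ≤ᵐ[volume.restrict (P m)] fun t => φ |u t| :=
        Filter.Eventually.of_forall fun t => hφ0 _ (abs_nonneg _)
      have hgi : IntegrableOn (fun t => φ |u t|) (P m) volume := by
        refine ⟨hφu.aestronglyMeasurable.restrict, ?_⟩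
        rw [hasFiniteIntegral_iff_ofReal hnnae]
        exact lt_top_iff_ne_top.mpr hFfin
      have hj : φ (c m) ≤ ⨍ t in P m, φ |u t| := by
        have := hconv.map_set_average_le hcont isClosed_Ici (hpos m).ne' (hfin m).ne
          (Filter.Eventually.of_forall fun t => abs_nonneg (u t)) hint hgi
        exact this
      have hvolpos : (0:ℝ) < (volume (P m)).toReal :=
        ENNReal.toReal_pos (hpos m).ne' (hfin m).ne
      have hmul : d m * (volume (P m)).toReal ≤ ∫ t in P m, φ |u t| := by
        rw [setAverage_eq, smul_eq_mul] at hj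
        calc d m * (volume (P m)).toReal
            ≤ ((volume (P m)).toReal⁻¹ * ∫ t in P m, φ |u t|) * (volume (P m)).toReal :=
              mul_le_mul_of_nonneg_right hj hvolpos.le
          _ = ∫ t in P m, φ |u t| := by
              field_simp
      calc ENNReal.ofReal (d m) * volume (P m)
          = ENNReal.ofReal (d m * (volume (P m)).toReal) := by
            rw [ENNReal.ofReal_mul (hd m), ENNReal.ofReal_toReal (hfin m).ne]
        _ ≤ ENNReal.ofReal (∫ t in P m, φ |u t|) := ENNReal.ofReal_le_ofReal hmul
        _ = ∫⁻ t in P m, F t := ofReal_integral_eq_lintegral_ofReal hgi hnnae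
    · have hc0 : c m = 0 := by
        rw [hcdef]
        simp [setAverage_eq, integral_undef hint]
      rw [hddef]
      simp [hc0, hzero]
  -- pointwise Jensen bound
  have key : ∀ x : Fin n → ℝ,
      ENNReal.ofReal (φ ((1/K) * ∑' m, c m * (P m).indicator (fun _ => (1:ℝ)) x))
        ≤ ENNReal.ofReal (1/K) * ∑' m, (P m).indicator (fun _ => ENNReal.ofReal (d m)) x := by
    intro x
    have hne : (∑' m, (P m).indicator (fun _ => (1:ℝ≥0∞)) x) ≠ ⊤ :=
      ne_top_of_le_ne_top ofReal_ne_top (hover x)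
    have hSfin : {m : ι | x ∈ P m}.Finite := by
      refine (ENNReal.finite_const_le_of_tsum_ne_top hne one_ne_zero).subset fun m hm => ?_
      simp only [mem_setOf_eq] at hm ⊢
      simp [Set.indicator_of_mem hm]
    set T := hSfin.toFinset with hT
    have hmemT : ∀ m : ι, m ∈ T ↔ x ∈ P m := fun m => by simp [hT]
    have htsum1 : ∑' m, (P m).indicator (fun _ => (1:ℝ≥0∞)) x = T.card := by
      rw [tsum_eq_sum (s := T)
        (fun m hm => indicator_of_notMem (fun h => hm ((hmemT m).2 h)) _)]
      rw [Finset.sum_congr rfl fun m hm => indicator_of_mem ((hmemT m).1 hm)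
        (fun _ => (1:ℝ≥0∞))]
      simp
    have hcard : (T.card : ℝ) ≤ K := by
      have h := hover x
      rw [htsum1] at h
      rcases Nat.eq_zero_or_pos T.card with h0 | h0
      · rw [h0]; exact_mod_cast hK0.le
      · exact (ENNReal.natCast_le_ofReal h0.ne').mp h
    have htsc : ∑' m, c m * (P m).indicator (fun _ => (1:ℝ)) x = ∑ m ∈ T, c m := by
      rw [tsum_eq_sum (s := T)
        (fun m hm => by rw [indicator_of_notMem (fun h => hm ((hmemT m).2 h))]; ring)]
      exact Finset.sum_congr rfl fun m hm => by
        rw [indicator_of_mem ((hmemT m).1 hm)]; ring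
    rw [htsc]
    refine le_trans (ENNReal.ofReal_le_ofReal
      (jensen_finset hconv hzero T c hc hK0 hcard)) ?_
    rw [ENNReal.ofReal_mul (by positivity)]
    refine mul_le_mul_right ?_ _
    calc ENNReal.ofReal (∑ m ∈ T, φ (c m)) = ∑ m ∈ T, ENNReal.ofReal (d m) :=
          ENNReal.ofReal_sum_of_nonneg fun m _ => hd m
      _ = ∑ m ∈ T, (P m).indicator (fun _ => ENNReal.ofReal (d m)) x :=
          Finset.sum_congr rfl fun m hm =>
          (indicator_of_mem ((hmemT m).1 hm) (fun _ => ENNReal.ofReal (d m))).symm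
      _ ≤ ∑' m, (P m).indicator (fun _ => ENNReal.ofReal (d m)) x := ENNReal.sum_le_tsum T
  -- assemble
  have hdm : ∀ m, Measurable fun x : Fin n → ℝ =>
      (P m).indicator (fun _ => ENNReal.ofReal (d m)) x :=
    fun m => measurable_const.indicator (hmeas m)
  calc ∫⁻ x, ENNReal.ofReal (φ ((1/K) * ∑' m, c m * (P m).indicator (fun _ => (1:ℝ)) x))
      ≤ ∫⁻ x, ENNReal.ofReal (1/K) * ∑' m, (P m).indicator (fun _ => ENNReal.ofReal (d m)) x :=
        lintegral_mono key
    _ = ENNReal.ofReal (1/K) * ∫⁻ x, ∑' m, (P m).indicator (fun _ => ENNReal.ofReal (d m)) x :=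
        lintegral_const_mul' _ _ ofReal_ne_top
    _ = ENNReal.ofReal (1/K) * ∑' m, ∫⁻ x, (P m).indicator (fun _ => ENNReal.ofReal (d m)) x := by
        rw [lintegral_tsum fun m => (hdm m).aemeasurable]
    _ = ENNReal.ofReal (1/K) * ∑' m, ENNReal.ofReal (d m) * volume (P m) := by
        congr 1
        exact tsum_congr fun m => lintegral_indicator_const (hmeas m) _
    _ ≤ ENNReal.ofReal (1/K) * ∑' m, ∫⁻ x in P m, F x :=
        mul_le_mul_right (ENNReal.tsum_le_tsum perm) _
    _ = ENNReal.ofReal (1/K) * ∫⁻ x, ∑' m, (P m).indicator F x := by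
        congr 1
        rw [show (∑' m, ∫⁻ x in P m, F x) = ∑' m, ∫⁻ x, (P m).indicator F x from
            tsum_congr fun m => (lintegral_indicator (hmeas m) F).symm,
          ← lintegral_tsum fun m => ((hFmeas.indicator (hmeas m)).aemeasurable)]
    _ ≤ ENNReal.ofReal (1/K) * ∫⁻ x, ENNReal.ofReal K * F x := by
        refine mul_le_mul_right (lintegral_mono fun x => ?_) _
        have hmul : ∑' m, (P m).indicator F x
            = F x * ∑' m, (P m).indicator (fun _ => (1:ℝ≥0∞)) x := by
          rw [← ENNReal.tsum_mul_left]
          refine tsum_congr fun m => ?_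
          by_cases hx : x ∈ P m
          · simp [indicator_of_mem hx]
          · simp [indicator_of_notMem hx]
        rw [hmul, mul_comm (ENNReal.ofReal K)]
        exact mul_le_mul_right (hover x) _
    _ = ENNReal.ofReal (1/K) * (ENNReal.ofReal K * ∫⁻ x, F x) := by
        rw [lintegral_const_mul' _ _ ofReal_ne_top]
    _ = ∫⁻ x, F x := by
        rw [← mul_assoc, ← ENNReal.ofReal_mul (by positivity), one_div,
          inv_mul_cancel₀ hK0.ne', ENNReal.ofReal_one, one_mul]
end

section
/- Let z < y be real numbers, m > 0, and let u : ℝ → ℝ be continuous on [z, y] and differentiable on (z, y) with u'(s) ≥ m for every s ∈ (z, y). Then ∫_z^y |u(s)| ds ≥ m (y − z)² / 8. -/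
/-!
Split `[z, y]` at its midpoint `c`. Since `u' ≥ m`, `u` grows at least linearly: if `u c ≥ 0`
then `|u s| ≥ m (s - c)` on `[c, y]`, and if `u c < 0` then `|u s| ≥ m (c - s)` on `[z, c]`.
Either ramp has integral `m ((y - z) / 2) ^ 2 / 2 = m (y - z) ^ 2 / 8`, and the other half
contributes a nonnegative amount.
-/

open MeasureTheory Set intervalIntegral

theorem integral_mul_sub_left (m a b : ℝ) :
    ∫ s in a..b, m * (s - a) = m * (b - a) ^ 2 / 2 := by
  rw [intervalIntegral.integral_const_mul, integral_comp_sub_right (fun s => s), integral_id]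
  ring

theorem integral_mul_right_sub (m a b : ℝ) :
    ∫ s in a..b, m * (b - s) = m * (b - a) ^ 2 / 2 := by
  rw [intervalIntegral.integral_const_mul, integral_comp_sub_left (fun s => s), integral_id]
  ring

section RampBelow

variable {f : ℝ → ℝ} {a b m : ℝ}

theorem le_integral_of_mul_sub_left_le (hab : a ≤ b) (hf : IntervalIntegrable f volume a b)
    (h : ∀ s ∈ Icc a b, m * (s - a) ≤ f s) : m * (b - a) ^ 2 / 2 ≤ ∫ s in a..b, f s := by
  rw [← integral_mul_sub_left]
  exact integral_mono_on hab ((by fun_prop : Continuous _).intervalIntegrable _ _) hf h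

theorem le_integral_of_mul_right_sub_le (hab : a ≤ b) (hf : IntervalIntegrable f volume a b)
    (h : ∀ s ∈ Icc a b, m * (b - s) ≤ f s) : m * (b - a) ^ 2 / 2 ≤ ∫ s in a..b, f s := by
  rw [← integral_mul_right_sub]
  exact integral_mono_on hab ((by fun_prop : Continuous _).intervalIntegrable _ _) hf h

end RampBelow

theorem mul_sub_le_sub_of_le_deriv {u : ℝ → ℝ} {z y m : ℝ} (hcont : ContinuousOn u (Icc z y))
    (hdiff : ∀ s ∈ Ioo z y, DifferentiableAt ℝ u s) (hderiv : ∀ s ∈ Ioo z y, m ≤ deriv u s) :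
    ∀ᵉ (a ∈ Icc z y) (b ∈ Icc z y), a ≤ b → m * (b - a) ≤ u b - u a := by
  rw [← interior_Icc] at hdiff hderiv
  exact (convex_Icc z y).mul_sub_le_image_sub_of_le_deriv hcont
    (fun s hs => (hdiff s hs).differentiableWithinAt) hderiv

theorem integral_abs_lower_bound_of_deriv_ge_general (z y m : ℝ) (hzy : z < y)
    (u : ℝ → ℝ)
    (hcont : ContinuousOn u (Icc z y))
    (hdiff : ∀ s ∈ Ioo z y, DifferentiableAt ℝ u s)
    (hderiv : ∀ s ∈ Ioo z y, m ≤ deriv u s) :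
    m * (y - z) ^ 2 / 8 ≤ ∫ s in z..y, |u s| := by
  set c := (z + y) / 2 with hc_def
  have hzc : z ≤ c := by linarith
  have hcy : c ≤ y := by linarith
  have hc : c ∈ Icc z y := ⟨hzc, hcy⟩
  have hgrowth := mul_sub_le_sub_of_le_deriv hcont hdiff hderiv
  have hleft : IntervalIntegrable (fun s => |u s|) volume z c :=
    (hcont.abs.mono (Icc_subset_Icc_right hcy)).intervalIntegrable_of_Icc hzc
  have hright : IntervalIntegrable (fun s => |u s|) volume c y :=
    (hcont.abs.mono (Icc_subset_Icc_left hzc)).intervalIntegrable_of_Icc hcy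
  rw [← integral_add_adjacent_intervals hleft hright]
  rcases le_or_gt 0 (u c) with huc | huc
  · have hramp := le_integral_of_mul_sub_left_le hcy hright fun s hs =>
      (by linarith [hgrowth c hc s ⟨hzc.trans hs.1, hs.2⟩ hs.1] : m * (s - c) ≤ u s).trans
        (le_abs_self _)
    have hrest : 0 ≤ ∫ s in z..c, |u s| := integral_nonneg hzc fun s _ => abs_nonneg (u s)
    rw [show y - c = (y - z) / 2 by linarith] at hramp
    linarith
  · have hramp := le_integral_of_mul_right_sub_le hzc hleft fun s hs =>
      (by linarith [hgrowth s ⟨hs.1, hs.2.trans hcy⟩ c hc hs.2] : m * (c - s) ≤ -u s).trans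
        (neg_le_abs _)
    have hrest : 0 ≤ ∫ s in c..y, |u s| := integral_nonneg hcy fun s _ => abs_nonneg (u s)
    rw [show c - z = (y - z) / 2 by linarith] at hramp
    linarith

/-- Quantitative lower bound: if `u` is continuous on `[z, y]`, differentiable on
`(z, y)` with `u' ≥ m > 0` there, then `∫_z^y |u| ≥ m (y − z)² / 8`. -/
theorem integral_abs_lower_bound_of_deriv_ge (z y m : ℝ) (hzy : z < y)
    (hm : 0 < m) (u : ℝ → ℝ)
    (hcont : ContinuousOn u (Icc z y))
    (hdiff : ∀ s ∈ Ioo z y, DifferentiableAt ℝ u s)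
    (hderiv : ∀ s ∈ Ioo z y, m ≤ deriv u s) :
    m * (y - z) ^ 2 / 8 ≤ ∫ s in z..y, |u s| :=
  integral_abs_lower_bound_of_deriv_ge_general z y m hzy u hcont hdiff hderiv
end
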